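/- arXiv:math/0409291 — 5 statements merged into one kernel-verified Lean document; each statement's English description precedes it below -/
import Mathlib

section
/- The difference q_n - q̃_n = O(1/n^4), where q_n = 1/(2π(n+5/8)(n-3/8)) and q̃_n = (1/(2n)) (2^{-2n} C(2n,n))^2. -/
open Filter Topology Real
open scoped Nat
set_option maxHeartbeats 1000000

noncomputable def aa (n : ℕ) : ℝ := ((Nat.choose (2 * n) n : ℝ) / 2 ^ (2 * n)) ^ 2

lemma choose_pos' (n : ℕ) : (0:ℝ) < (Nat.choose (2*n) n : ℝ) := by
  exact_mod_cast Nat.choose_pos (by omega)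

lemma aa_pos (n : ℕ) : 0 < aa n := by
  have := choose_pos' n
  unfold aa; positivity

lemma aa_step (n : ℕ) : aa (n+1) = aa n * ((2*n+1)/(2*n+2))^2 := by
  have h := Nat.succ_mul_centralBinom_succ n
  have h' : ((n:ℝ)+1) * (Nat.choose (2*(n+1)) (n+1) : ℝ)
      = 2 * (2*n+1) * (Nat.choose (2*n) n : ℝ) := by
    have e1 : Nat.centralBinom (n+1) = Nat.choose (2*(n+1)) (n+1) := rfl
    rw [← e1]
    have e2 : Nat.centralBinom n = Nat.choose (2*n) n := rfl
    rw [← e2]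
    exact_mod_cast congrArg (Nat.cast : ℕ → ℝ) h
  have hn1 : ((n:ℝ)+1) ≠ 0 := by positivity
  have hC : (Nat.choose (2*(n+1)) (n+1) : ℝ)
      = 2 * (2*n+1) * (Nat.choose (2*n) n : ℝ) / ((n:ℝ)+1) := by
    field_simp at h' ⊢; linarith [h']
  unfold aa
  rw [hC]
  have h2 : (2:ℝ) ^ (2*(n+1)) = 4 * 2 ^ (2*n) := by ring
  rw [h2]
  have hp : (2:ℝ) ^ (2*n) ≠ 0 := by positivity
  have h3 : (2*(n:ℝ)+2) ≠ 0 := by positivity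
  field_simp
  ring

lemma aa_le_one (n : ℕ) : aa n ≤ 1 := by
  induction n with
  | zero => unfold aa; norm_num
  | succ k ih =>
    rw [aa_step]
    have h1 : ((2*(k:ℝ)+1)/(2*(k:ℝ)+2))^2 ≤ 1 := by
      rw [div_pow, div_le_one (by positivity)]
      nlinarith [k.cast_nonneg (α := ℝ)]
    nlinarith [aa_pos k]

lemma aa_W (n : ℕ) : aa n * (Real.Wallis.W n * (2*(n:ℝ)+1)) = 1 := by
  have hC : (Nat.choose (2*n) n : ℝ) = ((2*n)! : ℝ) / ((n ! : ℝ) * (n ! : ℝ)) := by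
    rw [Nat.cast_choose ℝ (by omega : n ≤ 2*n)]
    have : 2*n - n = n := by omega
    rw [this]
  unfold aa
  rw [Real.Wallis.W_eq_factorial_ratio, hC]
  have h1 : ((n !) : ℝ) ≠ 0 := by positivity
  have h2 : (((2*n) !) : ℝ) ≠ 0 := by positivity
  have h3 : (2*(n:ℝ)+1) ≠ 0 := by positivity
  have h4 : (2:ℝ)^(2*n) ≠ 0 := by positivity
  have h5 : (2:ℝ)^(4*n) = (2^(2*n))^2 := by rw [← pow_mul]; ring_nf
  field_simp
  rw [h5]

lemma aa_tendsto : Tendsto (fun n => aa n * (2*(n:ℝ)+1)) atTop (𝓝 (2/π)) := by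
  have hW := Real.Wallis.tendsto_W_nhds_pi_div_two
  have h : Tendsto (fun n => (Real.Wallis.W n)⁻¹) atTop (𝓝 ((π/2)⁻¹)) :=
    hW.inv₀ (by positivity)
  have heq : ∀ n, (Real.Wallis.W n)⁻¹ = aa n * (2*(n:ℝ)+1) := by
    intro n
    have h3 : (2*(n:ℝ)+1) > 0 := by positivity
    have hWp := Real.Wallis.W_pos n
    have h := aa_W n
    field_simp
    nlinarith
  have hpi : ((π/2)⁻¹ : ℝ) = 2/π := by rw [inv_div]
  rw [hpi] at h
  exact h.congr heq

lemma htop : Tendsto (fun n : ℕ => 2*(n:ℝ)+1) atTop atTop := by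
  apply tendsto_atTop_add_const_right
  exact tendsto_natCast_atTop_atTop.const_mul_atTop two_pos

noncomputable def ff (n : ℕ) : ℝ := aa n * ((n:ℝ) + 1/4)

lemma ff_tendsto : Tendsto ff atTop (𝓝 (1/π)) := by
  have h2 : Tendsto (fun n : ℕ => (1:ℝ)/2 - (1/4)/(2*(n:ℝ)+1)) atTop (𝓝 ((1:ℝ)/2 - 0)) :=
    tendsto_const_nhds.sub (tendsto_const_nhds.div_atTop htop)
  have h := aa_tendsto.mul h2
  have hval : (2/π) * ((1:ℝ)/2 - 0) = 1/π := by
    rw [sub_zero]; ring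
  rw [hval] at h
  refine h.congr fun n => ?_
  unfold ff
  have h3 : (2*(n:ℝ)+1) ≠ 0 := by positivity
  field_simp
  ring

lemma ff_mono : Monotone ff := by
  apply monotone_nat_of_le_succ
  intro n
  unfold ff
  rw [aa_step]
  push_cast
  have h0 : (0:ℝ) ≤ (n:ℝ) := n.cast_nonneg
  have key : ((n:ℝ) + 1/4) ≤ ((2*(n:ℝ)+1)/(2*(n:ℝ)+2))^2 * ((n:ℝ)+1 + 1/4) := by
    rw [div_pow, div_mul_eq_mul_div, le_div_iff₀ (by positivity)]
    nlinarith
  rw [mul_assoc]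
  exact mul_le_mul_of_nonneg_left key (aa_pos n).le

lemma ff_le (n : ℕ) : ff n ≤ 1/π := ff_mono.ge_of_tendsto ff_tendsto n

noncomputable def gg (k : ℕ) : ℝ := aa (k+1) * (((k:ℝ)+1) + 1/4 + 1/(32*((k:ℝ)+1)))

lemma gg_tendsto : Tendsto gg atTop (𝓝 (1/π)) := by
  have h1 : Tendsto (fun k : ℕ => ff (k+1)) atTop (𝓝 (1/π)) :=
    ff_tendsto.comp (tendsto_add_atTop_nat 1)
  have htop2 : Tendsto (fun k : ℕ => 32*((k:ℝ)+1)) atTop atTop := by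
    apply Tendsto.const_mul_atTop (by norm_num : (0:ℝ) < 32)
    apply tendsto_atTop_add_const_right
    exact tendsto_natCast_atTop_atTop
  have h2 : Tendsto (fun k : ℕ => aa (k+1) * (1/(32*((k:ℝ)+1)))) atTop (𝓝 0) := by
    apply squeeze_zero (fun k => mul_nonneg (aa_pos _).le (by positivity))
      (g := fun k : ℕ => 1/(32*((k:ℝ)+1)))
    · intro k
      have hb : (0:ℝ) < 1/(32*((k:ℝ)+1)) := by positivity
      nlinarith [aa_le_one (k+1), aa_pos (k+1)]
    · exact tendsto_const_nhds.div_atTop htop2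
  have h := h1.add h2
  rw [add_zero] at h
  refine h.congr fun k => ?_
  unfold gg ff
  push_cast
  ring

lemma gg_anti : Antitone gg := by
  apply antitone_nat_of_succ_le
  intro k
  unfold gg
  rw [aa_step]
  set x : ℝ := (k:ℝ) + 1 with hxdef
  have hx : (1:ℝ) ≤ x := by
    rw [hxdef]; have := k.cast_nonneg (α := ℝ); linarith
  have hx0 : (0:ℝ) < x := by linarith
  push_cast
  have key : ((2*x+1)/(2*x+2))^2 * ((x+1) + 1/4 + 1/(32*(x+1))) ≤ x + 1/4 + 1/(32*x) := by
    rw [div_pow, div_mul_eq_mul_div, div_le_iff₀ (by positivity)]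
    have hne : x ≠ 0 := by linarith
    have hne1 : x + 1 ≠ 0 := by linarith
    have expand : (x+1/4+1/(32*x))*(2*x+2)^2 - (2*x+1)^2*((x+1)+1/4+1/(32*(x+1)))
        = (3*x+4)/(32*x*(x+1)) := by
      field_simp
      ring
    have hpos : (0:ℝ) < (3*x+4)/(32*x*(x+1)) := by positivity
    linarith
  have h2 := mul_le_mul_of_nonneg_left key (aa_pos (k+1)).le
  calc aa (k+1) * ((2*x+1)/(2*x+2))^2 * (x+1+1/4+1/(32*(x+1)))
      = aa (k+1) * (((2*x+1)/(2*x+2))^2 * ((x+1)+1/4+1/(32*(x+1)))) := by ring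
    _ ≤ aa (k+1) * (x+1/4+1/(32*x)) := h2

lemma gg_ge (k : ℕ) : 1/π ≤ gg k := gg_anti.le_of_tendsto gg_tendsto k

/-- The difference `q_n - q̃_n = O(1/n⁴)`, where `q_n = 1/(2π(n+5/8)(n-3/8))` is the
Brownian loop intensity and `q̃_n = (1/(2n)) (2^{-2n} C(2n,n))²` is the random walk
loop intensity. -/
theorem stmt4 :
    ∃ C : ℝ, 0 < C ∧ ∀ n : ℕ, 1 ≤ n →
      |1 / (2 * Real.pi * ((n : ℝ) + 5/8) * ((n : ℝ) - 3/8))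
          - (1 / (2 * (n : ℝ))) * ((Nat.choose (2 * n) n : ℝ) / 2 ^ (2 * n)) ^ 2|
        ≤ C / (n : ℝ) ^ 4 := by
  refine ⟨1, one_pos, ?_⟩
  intro n hn
  show |1 / (2 * π * ((n:ℝ) + 5/8) * ((n:ℝ) - 3/8)) - (1 / (2 * (n:ℝ))) * aa n|
      ≤ 1 / (n:ℝ) ^ 4
  have hx : (1:ℝ) ≤ (n:ℝ) := by exact_mod_cast hn
  have hx0 : (0:ℝ) < (n:ℝ) := by linarith
  have hπ : (0:ℝ) < π := pi_pos
  have hπ3 : (3:ℝ) < π := pi_gt_three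
  set x : ℝ := (n:ℝ) with hxdef
  have hUaa : aa n * (x + 1/4) ≤ 1/π := ff_le n
  have hLaa : 1/π ≤ aa n * (x + 1/4 + 1/(32*x)) := by
    obtain ⟨k, rfl⟩ : ∃ k, n = k + 1 := ⟨n-1, by omega⟩
    have h := gg_ge k
    unfold gg at h
    rw [hxdef]
    push_cast
    push_cast at h
    linarith
  have hP : (0:ℝ) < x^2 + x/4 - 15/64 := by nlinarith
  have hBu : (0:ℝ) < x^2 + x/4 := by nlinarith
  have hB : (0:ℝ) < x^2 + x/4 + 1/32 := by nlinarith
  have hden : 2 * π * (x + 5/8) * (x - 3/8) = 2*π*(x^2 + x/4 - 15/64) := by ring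
  rw [hden]
  have hq1 : 1/(2*x) * aa n ≤ 1/(2*π*(x^2 + x/4)) := by
    rw [le_div_iff₀ (by positivity)]
    have e : 1/(2*x) * aa n * (2*π*(x^2 + x/4)) = (aa n * (x + 1/4)) * π := by
      field_simp
    rw [e]
    have h1 : (1/π)*π = 1 := by field_simp
    nlinarith [mul_le_mul_of_nonneg_right hUaa hπ.le]
  have hq2 : 1/(2*π*(x^2 + x/4 + 1/32)) ≤ 1/(2*x) * aa n := by
    rw [div_le_iff₀ (by positivity)]
    have e : 1/(2*x) * aa n * (2*π*(x^2 + x/4 + 1/32))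
        = (aa n * (x + 1/4 + 1/(32*x))) * π := by
      field_simp
    rw [e]
    have h1 : (1/π)*π = 1 := by field_simp
    nlinarith [mul_le_mul_of_nonneg_right hLaa hπ.le]
  have hkey : 1/(2*π*(x^2 + x/4 - 15/64)) - 1/(2*π*(x^2 + x/4 + 1/32)) ≤ 1/x^4 := by
    have e : 1/(2*π*(x^2 + x/4 - 15/64)) - 1/(2*π*(x^2 + x/4 + 1/32))
        = (17/64) / (2*π*((x^2 + x/4 - 15/64)*(x^2 + x/4 + 1/32))) := by
      rw [div_sub_div _ _ (by positivity) (by positivity), div_eq_div_iff (by positivity) (by positivity)]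
      ring
    rw [e, div_le_div_iff₀ (by positivity) (by positivity)]
    have hPx : x^2 ≤ x^2 + x/4 - 15/64 := by nlinarith
    have hBx : x^2 ≤ x^2 + x/4 + 1/32 := by nlinarith
    have hprod : x^2 * x^2 ≤ (x^2 + x/4 - 15/64) * (x^2 + x/4 + 1/32) :=
      mul_le_mul hPx hBx (sq_nonneg x) hP.le
    have h3 : 3*(x^2*x^2) ≤ π*((x^2 + x/4 - 15/64)*(x^2 + x/4 + 1/32)) :=
      mul_le_mul hπ3.le hprod (by positivity) (by linarith)
    have hx4 : x^4 = x^2*x^2 := by ring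
    nlinarith [h3, hx4, sq_nonneg x]
  have hmono : 1/(2*π*(x^2 + x/4)) ≤ 1/(2*π*(x^2 + x/4 - 15/64)) := by
    apply one_div_le_one_div_of_le (by positivity)
    nlinarith
  have hxp : (0:ℝ) < 1/x^4 := by positivity
  rw [abs_le]
  constructor
  · linarith
  · linarith
end

section
/- Quantile coupling property: Let Z be a continuous random variable with strictly increasing distribution function F, let G be the distribution function of a discrete random variable with support {a_1, a_2, ...}, and let W be quantile-coupled with Z (W = a_j when r_{j-} < Z ≤ r_j, where F(r_{j-}) = G(a_j -) and F(r_j) = G(a_j)). If x > 0 satisfies F(a_k - x) ≤ G(a_k -) < G(a_k) ≤ F(a_k + x), then |Z - W| ≤ x on the event {W = a_k}. -/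
/-- Quantile coupling property: if `W` is quantile-coupled with `Z` (i.e. `W = a_j` when
`r_{j-} < Z ≤ r_j`, where `F(r_{j-}) = G(a_j-)` and `F(r_j) = G(a_j)` for the continuous
strictly increasing distribution function `F` of `Z` and the discrete distribution
function `G`), and `x > 0` satisfies `F(a_k - x) ≤ G(a_k-) < G(a_k) ≤ F(a_k + x)`, then
`|Z - W| ≤ x` on the event `{W = a_k}`. -/
theorem stmt10 (F G : ℝ → ℝ) (a rminus r : ℕ → ℝ)
    (hF : StrictMono F) (hFc : Continuous F)
    (hr : ∀ j, F (r j) = G (a j))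
    (hrm : ∀ j, F (rminus j) = Function.leftLim G (a j))
    (W : ℝ → ℝ) (hW : ∀ j z, rminus j < z → z ≤ r j → W z = a j)
    (k : ℕ) (x : ℝ) (hx : 0 < x)
    (h1 : F (a k - x) ≤ Function.leftLim G (a k))
    (h2 : Function.leftLim G (a k) < G (a k))
    (h3 : G (a k) ≤ F (a k + x))
    (z : ℝ) (hz1 : rminus k < z) (hz2 : z ≤ r k) :
    |z - W z| ≤ x := by
  rw [hW k z hz1 hz2]
  have hub : r k ≤ a k + x := hF.le_iff_le.mp (by rw [hr k]; exact h3)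
  have hlb : a k - x ≤ rminus k := hF.le_iff_le.mp (by rw [hrm k]; exact h1)
  rw [abs_le]
  constructor <;> linarith
end

section
/- Beurling-type estimate for fixed times: there is a constant c such that for any continuous curve γ: [0,∞) → C with |γ(0)| = r and |γ(t)| → ∞, and any starting point z with |z| ≤ r, a standard planar Brownian motion B started at z satisfies P^z{B[0,t] ∩ γ[0,∞) = ∅} ≤ c (r/√t)^{1/2}, assuming the corresponding estimate holds when the fixed time t is replaced by the exit time σ_t = inf{s : |B_s| = √t}. -/
open MeasureTheory ProbabilityTheory

/-- `W` is a standard one-dimensional Brownian motion. -/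
def IsStandardBM {Ω : Type*} [MeasurableSpace Ω] (μ : Measure Ω)
    (W : ℝ → Ω → ℝ) : Prop :=
  (∀ t : ℝ, Measurable (W t))
  ∧ (∀ ω, W 0 ω = 0)
  ∧ (∀ ω, Continuous fun t => W t ω)
  ∧ (∀ s t : ℝ, 0 ≤ s → s ≤ t →
      μ.map (fun ω => W t ω - W s ω) = gaussianReal 0 (Real.toNNReal (t - s)))
  ∧ (∀ (k : ℕ) (t : Fin (k + 1) → ℝ), Monotone t → (∀ i, 0 ≤ t i) →
      iIndepFun
        (fun (i : Fin k) ω => W (t i.succ) ω - W (t i.castSucc) ω) μ)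

/-- `B` is a standard planar Brownian motion: its real and imaginary parts (relative to
the starting point) are independent standard one-dimensional Brownian motions. -/
def IsPlanarBM {Ω : Type*} [MeasurableSpace Ω] (μ : Measure Ω)
    (B : ℝ → Ω → ℂ) : Prop :=
  IsStandardBM μ (fun t ω => (B t ω - B 0 ω).re)
  ∧ IsStandardBM μ (fun t ω => (B t ω - B 0 ω).im)
  ∧ Indep
      (⨆ t : ℝ, MeasurableSpace.comap (fun ω => (B t ω - B 0 ω).re) inferInstance)
      (⨆ t : ℝ, MeasurableSpace.comap (fun ω => (B t ω - B 0 ω).im) inferInstance) μ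

/-- The hitting time of the circle of radius `√t` by the path `B · ω`. -/
noncomputable def sigmaT {Ω : Type*} (B : ℝ → Ω → ℂ) (t : ℝ) (ω : Ω) : ℝ :=
  sInf {s : ℝ | 0 ≤ s ∧ ‖B s ω‖ = Real.sqrt t}

/-!
Halve the time horizon repeatedly. Up to time `T`, a path started at `z` either leaves the
disc of radius `√T / 4` about `z`, and then it has avoided the curve up to the exit time of
that disc, so the exit-time estimate for the path recentred at `z` (where the curve starts at
distance `|γ(0) - z| ≤ 2r`) applies; or it stays in the disc, which forces the real part of
its increment over `[T/2, T]` to be smaller than `√T / 2`. That event is independent of the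
path up to `T/2` and has probability at most `1/√π < 4/7`. Writing `H k` for the avoidance
probability up to `t / 2^k`, this gives `H k ≤ 3 c₀ (6/5)^k (r/√t)^{1/2} + (4/7) H (k+1)`,
and since `(4/7)(6/5) < 1` the recursion unrolls to `H 0 ≤ 10 c₀ (r/√t)^{1/2}`.
-/

open MeasureTheory ProbabilityTheory Set Filter Topology

lemma isClosed_image_Ici_of_tendsto_norm {E : Type*} [NormedAddCommGroup E] {γ : ℝ → E}
    (hγ : Continuous γ) (hγ_tendsto : Tendsto (fun s => ‖γ s‖) atTop atTop) (a : ℝ) :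
    IsClosed (γ '' Ici a) := by
  refine isClosed_of_closure_subset fun p hp => ?_
  obtain ⟨M, hM⟩ := (tendsto_atTop.1 hγ_tendsto (‖p‖ + 1)).exists_forall_of_atTop
  have hsplit : γ '' Ici a ⊆ γ '' Icc a M ∪ {w | ‖p‖ + 1 ≤ ‖w‖} := by
    rintro _ ⟨s, hs, rfl⟩
    rcases le_total s M with h | h
    · exact Or.inl ⟨s, ⟨hs, h⟩, rfl⟩
    · exact Or.inr (hM s h)
  have hfar : p ∉ closure {w : E | ‖p‖ + 1 ≤ ‖w‖} := by
    rw [(isClosed_le continuous_const continuous_norm).closure_eq]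
    simp
  have hp' := closure_mono hsplit hp
  rw [closure_union, (isCompact_Icc.image hγ).isClosed.closure_eq] at hp'
  obtain ⟨s, hs, rfl⟩ := hp'.resolve_right hfar
  exact ⟨s, hs.1, rfl⟩

/-- Avoiding `K` amounts to keeping a uniform positive distance from `K` at the sample
times, which only involves countably many of the `X q`. -/
lemma measurableSet_forall_notMem_of_dense {Ω E : Type*} [PseudoMetricSpace E]
    [MeasurableSpace E] [OpensMeasurableSpace E] {m : MeasurableSpace Ω} {X : ℝ → Ω → E}
    {S D : Set ℝ} {K : Set E} (hS : IsCompact S) (hDS : D ⊆ S) (hSD : S ⊆ closure D)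
    (hD : D.Countable) (hX : ∀ ω, Continuous fun s => X s ω)
    (hXm : ∀ q ∈ D, Measurable[m] (X q)) (hK : IsClosed K) :
    MeasurableSet[m] {ω | ∀ s ∈ S, X s ω ∉ K} := by
  have hrepr : {ω | ∀ s ∈ S, X s ω ∉ K}
      = ⋃ n : ℕ, ⋂ q ∈ D, X q ⁻¹' (Metric.thickening (1 / (n + 1)) K)ᶜ := by
    ext ω
    simp only [mem_ofPred_eq, mem_iUnion, mem_iInter, mem_preimage, mem_compl_iff]
    constructor
    · intro hω
      have hdisj : Disjoint ((X · ω) '' S) K := by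
        rw [Set.disjoint_left]
        rintro _ ⟨s, hs, rfl⟩
        exact hω s hs
      obtain ⟨δ, hδ, hδdisj⟩ := hdisj.exists_thickenings (hS.image (hX ω)) hK
      obtain ⟨n, hn⟩ := exists_nat_one_div_lt hδ
      refine ⟨n, fun q hq hqK => Set.disjoint_left.1 hδdisj ?_
        (Metric.thickening_mono hn.le K hqK)⟩
      exact Metric.self_subset_thickening hδ _ ⟨q, hDS hq, rfl⟩
    · rintro ⟨n, hn⟩ s hs hsK
      have hclosed : IsClosed {s | X s ω ∉ Metric.thickening (1 / (n + 1)) K} :=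
        Metric.isOpen_thickening.isClosed_compl.preimage (hX ω)
      exact closure_minimal (fun q hq => hn q hq) hclosed (hSD hs)
        (Metric.self_subset_thickening (by positivity) K hsK)
  rw [hrepr]
  exact MeasurableSet.iUnion fun n => MeasurableSet.biInter hD fun q hq =>
    hXm q hq Metric.isOpen_thickening.measurableSet.compl

def dyadicGrid (T : ℝ) (n : ℕ) : Set ℝ :=
  (fun j : ℕ => (j : ℝ) * (T / 2 ^ n)) '' Iic (2 ^ n)

lemma dyadicGrid_subset_Icc {T : ℝ} (hT : 0 ≤ T) (n : ℕ) : dyadicGrid T n ⊆ Icc 0 T := by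
  rintro _ ⟨j, hj, rfl⟩
  have hj' : (j : ℝ) ≤ 2 ^ n := by exact_mod_cast hj
  refine ⟨by positivity, ?_⟩
  calc (j : ℝ) * (T / 2 ^ n) ≤ 2 ^ n * (T / 2 ^ n) := by gcongr
    _ = T := by field_simp

lemma dyadicGrid_subset_succ (T : ℝ) (n : ℕ) : dyadicGrid T n ⊆ dyadicGrid T (n + 1) := by
  rintro _ ⟨j, hj, rfl⟩
  refine ⟨2 * j, by simp only [mem_Iic] at hj ⊢; omega, ?_⟩
  push_cast
  field_simp
  ring

lemma Icc_subset_closure_iUnion_dyadicGrid {T : ℝ} (hT : 0 < T) :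
    Icc 0 T ⊆ closure (⋃ n, dyadicGrid T n) := by
  intro s hs
  rw [Metric.mem_closure_iff]
  intro ε hε
  obtain ⟨n, hn⟩ := exists_nat_gt (T / ε)
  set δ : ℝ := T / 2 ^ n with hδ
  have hδpos : 0 < δ := by positivity
  have hδε : δ < ε := by
    rw [hδ, div_lt_iff₀ (by positivity)]
    rw [div_lt_iff₀ hε] at hn
    have : (n : ℝ) < 2 ^ n := by exact_mod_cast Nat.lt_two_pow_self
    nlinarith
  have hfloor : (⌊s / δ⌋₊ : ℝ) ≤ s / δ := Nat.floor_le (div_nonneg hs.1 hδpos.le)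
  have hfloor' : s / δ < ⌊s / δ⌋₊ + 1 := Nat.lt_floor_add_one _
  refine ⟨⌊s / δ⌋₊ * δ, mem_iUnion.2 ⟨n, ⌊s / δ⌋₊, ?_, rfl⟩, ?_⟩
  · refine Nat.floor_le_of_le ?_
    rw [div_le_iff₀ hδpos, hδ]
    push_cast
    field_simp
    exact hs.2
  · rw [le_div_iff₀ hδpos] at hfloor
    rw [div_lt_iff₀ hδpos] at hfloor'
    rw [Real.dist_eq, abs_of_nonneg (by linarith)]
    linarith

section Independence

open MeasurableSpace

variable {Ω : Type*} [mΩ : MeasurableSpace Ω] {μ : Measure Ω}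

lemma IsStandardBM.indep_dyadicGrid_increment {W : ℝ → Ω → ℝ} (hW : IsStandardBM μ W)
    {T' T : ℝ} (hT' : 0 ≤ T') (hT : T' ≤ T) (n : ℕ) :
    Indep (⨆ q ∈ dyadicGrid T' n, MeasurableSpace.comap (W q) inferInstance)
      (MeasurableSpace.comap (fun ω => W T ω - W T' ω) inferInstance) μ := by
  obtain ⟨hmeas, hzero, -, -, hincr⟩ := hW
  set δ : ℝ := T' / 2 ^ n
  have hδ : 0 ≤ δ := by positivity
  have hgrid : (2 : ℝ) ^ n * δ = T' := by simp only [δ]; field_simp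
  set v : Fin (2 ^ n + 2) → ℝ := fun i => if (i : ℕ) ≤ 2 ^ n then (i : ℕ) * δ else T
  have hv_mono : Monotone v := by
    intro i j hij
    have hij' : (i : ℕ) ≤ j := hij
    simp only [v]
    split_ifs with hi hj hj
    · gcongr
    · calc ((i : ℕ) : ℝ) * δ ≤ 2 ^ n * δ := by gcongr; exact_mod_cast hi
        _ ≤ T := hgrid ▸ hT
    · omega
    · exact le_rfl
  have hv_nonneg : ∀ i, 0 ≤ v i := fun i => by
    simp only [v]; split_ifs <;> [positivity; linarith]
  set incr : Fin (2 ^ n + 1) → Ω → ℝ := fun i ω => W (v i.succ) ω - W (v i.castSucc) ω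
  have hincr_meas : ∀ i, Measurable (incr i) := fun i => (hmeas _).sub (hmeas _)
  have hindep := indep_iSup_of_disjoint (fun i => (hincr_meas i).comap_le)
    (hincr _ v hv_mono hv_nonneg).iIndep
    (disjoint_compl_left : Disjoint ({Fin.last (2 ^ n)}ᶜ : Set _) {Fin.last (2 ^ n)})
  refine indep_of_indep_of_le_right (indep_of_indep_of_le_left hindep ?_) ?_
  · -- `W (j δ)` is the sum of the first `j` grid increments
    have hpartial : ∀ j : ℕ, j ≤ 2 ^ n →
        Measurable[⨆ i ∈ ({Fin.last (2 ^ n)}ᶜ : Set _),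
          MeasurableSpace.comap (incr i) inferInstance]
          (W (j * δ)) := by
      intro j
      induction j with
      | zero =>
        intro _
        have hW0 : W ((0 : ℕ) * δ) = fun _ => 0 := by funext ω; simpa using hzero ω
        rw [hW0]
        exact measurable_const
      | succ j ih =>
        intro hj
        have hsum : W ((j + 1 : ℕ) * δ) = fun ω => W (j * δ) ω + incr ⟨j, by omega⟩ ω := by
          funext ω
          simp only [incr, v, Fin.succ_mk, Fin.castSucc_mk, if_pos hj,
            if_pos (by omega : j ≤ 2 ^ n)]
          ring
        have hj_ne : (⟨j, by omega⟩ : Fin (2 ^ n + 1)) ∈ ({Fin.last (2 ^ n)}ᶜ : Set _) := by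
          simp [Fin.ext_iff]; omega
        rw [hsum]
        exact (ih (by omega)).add (Measurable.of_comap_le (le_biSup
          (fun i => MeasurableSpace.comap (incr i) inferInstance) hj_ne))
    refine iSup₂_le fun q hq => ?_
    obtain ⟨j, hj, rfl⟩ := hq
    exact (hpartial j hj).comap_le
  · have hlast : incr (Fin.last (2 ^ n)) = fun ω => W T ω - W T' ω := by
      funext ω
      simp only [incr, v, Fin.val_succ, Fin.val_castSucc, Fin.val_last, if_pos le_rfl,
        if_neg (by omega : ¬ 2 ^ n + 1 ≤ 2 ^ n)]
      rw [← hgrid]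
      norm_num
    rw [← hlast]
    exact le_biSup (fun i => MeasurableSpace.comap (incr i) inferInstance) (mem_singleton _)

lemma Indep.sup_left_of_le_of_indep [IsZeroOrProbabilityMeasure μ]
    {mA mZ m₁ m₂ : MeasurableSpace Ω} (hAZ : Indep mA mZ μ) (hA : mA ≤ m₁) (hZ : mZ ≤ m₁)
    (h₁₂ : Indep m₁ m₂ μ) (h₁ : m₁ ≤ mΩ) (h₂ : m₂ ≤ mΩ) :
    Indep (mA ⊔ m₂) mZ μ := by
  set p : Set (Set Ω) := {s | ∃ a, MeasurableSet[mA] a ∧ ∃ b, MeasurableSet[m₂] b ∧ s = a ∩ b}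
  have hp_gen : mA ⊔ m₂ = generateFrom p := by
    refine le_antisymm (sup_le (fun s hs => ?_) (fun s hs => ?_)) (generateFrom_le ?_)
    · exact measurableSet_generateFrom ⟨s, hs, univ, MeasurableSet.univ, (inter_univ s).symm⟩
    · exact measurableSet_generateFrom ⟨univ, MeasurableSet.univ, s, hs, (univ_inter s).symm⟩
    · rintro _ ⟨a, ha, b, hb, rfl⟩
      exact (le_sup_left (b := m₂) _ ha).inter (le_sup_right (a := mA) _ hb)
  have hp_pi : IsPiSystem p := by
    rintro _ ⟨a, ha, b, hb, rfl⟩ _ ⟨a', ha', b', hb', rfl⟩ _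
    exact ⟨a ∩ a', ha.inter ha', b ∩ b', hb.inter hb', inter_inter_inter_comm a b a' b'⟩
  refine IndepSets.indep (sup_le (hA.trans h₁) h₂) (hZ.trans h₁) hp_pi
    (@isPiSystem_measurableSet Ω mZ) hp_gen (@generateFrom_measurableSet Ω mZ).symm ?_
  rw [IndepSets_iff]
  rintro _ c ⟨a, ha, b, hb, rfl⟩ hc
  have h₁₂' := (Indep_iff _ _ _).1 h₁₂
  rw [show a ∩ b ∩ c = a ∩ c ∩ b by ac_rfl, h₁₂' _ _ ((hA _ ha).inter (hZ _ hc)) hb,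
    (Indep_iff _ _ _).1 hAZ _ _ ha hc, h₁₂' _ _ (hA _ ha) hb]
  ring

end Independence

lemma gaussianReal_Ioo_le (m : ℝ) {v : NNReal} (hv : v ≠ 0) (a b : ℝ) :
    gaussianReal m v (Ioo a b) ≤ ENNReal.ofReal ((b - a) / √(2 * Real.pi * v)) := by
  have hpdf : ∀ x, gaussianPDF m v x ≤ ENNReal.ofReal (√(2 * Real.pi * v))⁻¹ := fun x => by
    rw [gaussianPDF, gaussianPDFReal_def]
    refine ENNReal.ofReal_le_ofReal (mul_le_of_le_one_right (by positivity) ?_)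
    exact Real.exp_le_one_iff.2 (div_nonpos_of_nonpos_of_nonneg (by nlinarith) (by positivity))
  calc gaussianReal m v (Ioo a b)
      ≤ ∫⁻ _ in Ioo a b, ENNReal.ofReal (√(2 * Real.pi * v))⁻¹ := by
        rw [gaussianReal_apply _ hv]
        exact lintegral_mono hpdf
    _ = ENNReal.ofReal ((b - a) / √(2 * Real.pi * v)) := by
        rw [setLIntegral_const, Real.volume_Ioo, ← ENNReal.ofReal_mul (by positivity),
          div_eq_mul_inv, mul_comm]

section PlanarBM

variable {Ω : Type*} [mΩ : MeasurableSpace Ω] {μ : Measure Ω} {B : ℝ → Ω → ℂ}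

def avoiding (B : ℝ → Ω → ℂ) (K : Set ℂ) (T : ℝ) : Set Ω :=
  {ω | ∀ s ∈ Icc 0 T, B s ω ∉ K}

lemma IsPlanarBM.continuous_path (hB : IsPlanarBM μ B) (ω : Ω) :
    Continuous fun s => B s ω := by
  have hpath : (fun s => B s ω)
      = fun s => ((B s ω - B 0 ω).re : ℂ) + (B s ω - B 0 ω).im * Complex.I + B 0 ω :=
    funext fun s => by rw [Complex.re_add_im]; ring
  rw [hpath]
  exact ((Complex.continuous_ofReal.comp (hB.1.2.2.1 ω)).add
    ((Complex.continuous_ofReal.comp (hB.2.1.2.2.1 ω)).mul continuous_const)).add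
    continuous_const

lemma IsPlanarBM.sub_const (hB : IsPlanarBM μ B) (z : ℂ) :
    IsPlanarBM μ (fun t ω => B t ω - z) := by
  simpa only [IsPlanarBM, sub_sub_sub_cancel_right] using hB

lemma IsPlanarBM.measure_re_increment_mem_Ioo_le (hB : IsPlanarBM μ B) {T' T : ℝ}
    (hT' : 0 ≤ T') (hT : T' < T) (a b : ℝ) :
    μ {ω | (B T ω - B T' ω).re ∈ Ioo a b}
      ≤ ENNReal.ofReal ((b - a) / √(2 * Real.pi * (T - T'))) := by
  obtain ⟨⟨hmeas, -, -, hlaw, -⟩, -⟩ := hB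
  have hincr : {ω | (B T ω - B T' ω).re ∈ Ioo a b}
      = (fun ω => (B T ω - B 0 ω).re - (B T' ω - B 0 ω).re) ⁻¹' Ioo a b := by
    ext ω
    simp only [mem_ofPred_eq, mem_preimage, Complex.sub_re, sub_sub_sub_cancel_right]
  have hmeas_incr : Measurable fun ω => (B T ω - B 0 ω).re - (B T' ω - B 0 ω).re :=
    (hmeas T).sub (hmeas T')
  rw [hincr, ← Measure.map_apply hmeas_incr measurableSet_Ioo,
    hlaw T' T hT' hT.le]
  have hv : (T - T').toNNReal ≠ 0 := by simpa using hT
  simpa only [Real.coe_toNNReal _ (sub_nonneg.2 hT.le)] using gaussianReal_Ioo_le 0 hv a b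

/-- Avoidance up to `T'` is measurable with respect to the real part sampled on the dyadic
grid of `[0, T']` together with the whole imaginary part, and that σ-algebra is independent
of the real increment on `[T', T]`. -/
lemma IsPlanarBM.measure_avoiding_inter_re_increment [IsProbabilityMeasure μ]
    (hB : IsPlanarBM μ B) {z : ℂ} (hB0 : ∀ ω, B 0 ω = z) {K : Set ℂ} (hK : IsClosed K)
    {T' T : ℝ} (hT' : 0 < T') (hT : T' ≤ T) {S : Set ℝ} (hS : MeasurableSet S) :
    μ (avoiding B K T' ∩ {ω | (B T ω - B T' ω).re ∈ S})
      = μ (avoiding B K T') * μ {ω | (B T ω - B T' ω).re ∈ S} := by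
  have hcont := hB.continuous_path
  obtain ⟨hre, him, hre_im⟩ := hB
  set Wre : ℝ → Ω → ℝ := fun t ω => (B t ω - B 0 ω).re
  set Wim : ℝ → Ω → ℝ := fun t ω => (B t ω - B 0 ω).im
  set mRe := ⨆ t, MeasurableSpace.comap (Wre t) inferInstance
  set mIm := ⨆ t, MeasurableSpace.comap (Wim t) inferInstance
  set mGrid : ℕ → MeasurableSpace Ω :=
    fun n => ⨆ q ∈ dyadicGrid T' n, MeasurableSpace.comap (Wre q) inferInstance
  set mZ := MeasurableSpace.comap (fun ω => Wre T ω - Wre T' ω) inferInstance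
  have hRe_le : mRe ≤ mΩ := iSup_le fun t => (hre.1 t).comap_le
  have hIm_le : mIm ≤ mΩ := iSup_le fun t => (him.1 t).comap_le
  have hGrid_le : ∀ n, mGrid n ≤ mRe := fun n => iSup₂_le fun q _ =>
    le_iSup (fun t => MeasurableSpace.comap (Wre t) inferInstance) q
  have hWre_meas : ∀ t, Measurable[mRe] (Wre t) := fun t =>
    Measurable.of_comap_le (le_iSup (fun t => MeasurableSpace.comap (Wre t) inferInstance) t)
  have hZ_le : mZ ≤ mRe := ((hWre_meas T).sub (hWre_meas T')).comap_le
  -- the σ-algebras introduced by `set` are local instances, so `mΩ` is passed explicitly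
  have hindep : Indep ((⨆ n, mGrid n) ⊔ mIm) mZ μ := by
    refine Indep.sup_left_of_le_of_indep (mΩ := mΩ) ?_ (iSup_le hGrid_le) hZ_le hre_im
      hRe_le hIm_le
    exact indep_iSup_of_monotone (_mΩ := mΩ)
      (fun n => hre.indep_dyadicGrid_increment (mΩ := mΩ) hT'.le hT n)
      (fun n => (hGrid_le n).trans hRe_le) (hZ_le.trans hRe_le)
      (monotone_nat_of_le_succ fun n => biSup_mono (dyadicGrid_subset_succ T' n))
  have hB_meas : ∀ q ∈ ⋃ n, dyadicGrid T' n, Measurable[(⨆ n, mGrid n) ⊔ mIm] (B q) := by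
    intro q hq
    obtain ⟨n, hqn⟩ := mem_iUnion.1 hq
    have hre_q : Measurable[(⨆ n, mGrid n) ⊔ mIm] (Wre q) := Measurable.of_comap_le <|
      (le_biSup (fun t => MeasurableSpace.comap (Wre t) inferInstance) hqn).trans <|
        (le_iSup mGrid n).trans le_sup_left
    have him_q : Measurable[(⨆ n, mGrid n) ⊔ mIm] (Wim q) := Measurable.of_comap_le <|
      (le_iSup (fun t => MeasurableSpace.comap (Wim t) inferInstance) q).trans le_sup_right
    have hBq : B q = fun ω => (Wre q ω : ℂ) + Wim q ω * Complex.I + z := funext fun ω => by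
      simp only [Wre, Wim, Complex.re_add_im, hB0]
      ring
    rw [hBq]
    exact ((Complex.measurable_ofReal.comp hre_q).add
      ((Complex.measurable_ofReal.comp him_q).mul_const _)).add_const z
  have havoid : MeasurableSet[(⨆ n, mGrid n) ⊔ mIm] (avoiding B K T') :=
    measurableSet_forall_notMem_of_dense isCompact_Icc
      (iUnion_subset fun n => dyadicGrid_subset_Icc hT'.le n)
      (Icc_subset_closure_iUnion_dyadicGrid hT')
      (countable_iUnion fun n => ((finite_Iic _).image _).countable) hcont hB_meas hK
  have hincr : MeasurableSet[mZ] {ω | (B T ω - B T' ω).re ∈ S} := by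
    refine MeasurableSpace.measurableSet_comap.2 ⟨S, hS, ?_⟩
    ext ω
    simp only [Wre, mem_preimage, mem_ofPred_eq, Complex.sub_re, sub_sub_sub_cancel_right]
  exact (Indep_iff _ _ _).1 hindep _ _ havoid hincr

end PlanarBM

lemma le_div_of_le_mul_pow_add_mul_succ {H : ℕ → ℝ} {a p q C : ℝ} (ha : 0 ≤ a) (hp : 0 ≤ p)
    (hp1 : p < 1) (hq : 0 ≤ q) (hpq : p * q < 1) (hC : ∀ k, H k ≤ C)
    (hstep : ∀ k, H k ≤ a * q ^ k + p * H (k + 1)) :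
    H 0 ≤ a / (1 - p * q) := by
  have hunroll : ∀ N, H 0 ≤ a * ∑ k ∈ Finset.range N, (p * q) ^ k + p ^ N * H N := by
    intro N
    induction N with
    | zero => simp
    | succ N ih =>
      calc H 0 ≤ a * ∑ k ∈ Finset.range N, (p * q) ^ k + p ^ N * H N := ih
        _ ≤ a * ∑ k ∈ Finset.range N, (p * q) ^ k + p ^ N * (a * q ^ N + p * H (N + 1)) := by
          gcongr
          exact hstep N
        _ = a * ∑ k ∈ Finset.range (N + 1), (p * q) ^ k + p ^ (N + 1) * H (N + 1) := by
          rw [Finset.sum_range_succ, mul_pow]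
          ring
  have hbound : ∀ N, H 0 ≤ a / (1 - p * q) + p ^ N * C := by
    intro N
    have hgeom := geom_sum_Ico_le_of_lt_one (mul_nonneg hp hq) hpq (m := 0) (n := N)
    rw [← Finset.range_eq_Ico, pow_zero] at hgeom
    calc H 0 ≤ a * ∑ k ∈ Finset.range N, (p * q) ^ k + p ^ N * H N := hunroll N
      _ ≤ a * (1 / (1 - p * q)) + p ^ N * C := by gcongr; exact hC N
      _ = a / (1 - p * q) + p ^ N * C := by ring
  have hlim : Tendsto (fun N => a / (1 - p * q) + p ^ N * C) atTop (𝓝 (a / (1 - p * q))) := by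
    simpa using tendsto_const_nhds.add
      ((tendsto_pow_atTop_nhds_zero_of_lt_one hp hp1).mul_const C)
  exact ge_of_tendsto' hlim hbound

lemma sqrt_div_sqrt_div_two_pow_le {ρ r t : ℝ} (hρ : 0 ≤ ρ) (hρr : ρ ≤ 2 * r) (ht : 0 < t)
    (k : ℕ) :
    √(4 * ρ / √(t / 2 ^ k)) ≤ 3 * (6 / 5) ^ k * √(r / √t) := by
  have hst : 0 < √t := Real.sqrt_pos.2 ht
  have hr : 0 ≤ r := by linarith
  have hroot : √(√(2 ^ k)) ≤ (6 / 5 : ℝ) ^ k := by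
    have h : (2 : ℝ) ^ k ≤ (((6 / 5 : ℝ) ^ k) ^ 2) ^ 2 := by
      rw [← pow_mul, ← pow_mul, mul_comm, pow_mul]
      exact pow_le_pow_left₀ (by norm_num) (by norm_num) k
    calc √(√(2 ^ k)) ≤ √(√((((6 / 5 : ℝ) ^ k) ^ 2) ^ 2)) := by gcongr
      _ = (6 / 5) ^ k := by rw [Real.sqrt_sq (by positivity), Real.sqrt_sq (by positivity)]
  have hsqrt8 : √8 ≤ (3 : ℝ) := Real.sqrt_le_iff.2 ⟨by norm_num, by norm_num⟩
  calc √(4 * ρ / √(t / 2 ^ k)) ≤ √(8 * (r / √t) * √(2 ^ k)) := by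
        refine Real.sqrt_le_sqrt ?_
        rw [Real.sqrt_div ht.le, div_div_eq_mul_div,
          show 8 * (r / √t) * √(2 ^ k) = 8 * r * √(2 ^ k) / √t by ring]
        gcongr ?_ * _ / _
        linarith
    _ = √8 * √(r / √t) * √(√(2 ^ k)) := by
        rw [Real.sqrt_mul (by positivity), Real.sqrt_mul (by norm_num)]
    _ ≤ 3 * √(r / √t) * (6 / 5) ^ k := by gcongr
    _ = 3 * (6 / 5) ^ k * √(r / √t) := by ring

lemma avoiding_subset_exit_union_stay {Ω : Type*} {B : ℝ → Ω → ℂ} {z : ℂ}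
    (hcont : ∀ ω, Continuous fun s => B s ω) (hB0 : ∀ ω, B 0 ω = z) (K : Set ℂ)
    {T' T ρ : ℝ} (hρ : 0 ≤ ρ) (hT' : 0 ≤ T') (hT : T' ≤ T) :
    avoiding B K T ⊆ (avoiding B K T ∩ {ω | ∃ s ∈ Icc 0 T, ‖B s ω - z‖ = ρ})
      ∪ (avoiding B K T' ∩ {ω | (B T ω - B T' ω).re ∈ Ioo (-(2 * ρ)) (2 * ρ)}) := by
  intro ω hω
  by_cases hexit : ∃ s ∈ Icc 0 T, ‖B s ω - z‖ = ρ
  · exact Or.inl ⟨hω, hexit⟩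
  push Not at hexit
  have hinside : ∀ s ∈ Icc 0 T, ‖B s ω - z‖ < ρ := by
    intro s hs
    by_contra! hge
    have hivt := intermediate_value_Icc hs.1
      ((continuous_norm.comp ((hcont ω).sub continuous_const)).continuousOn)
      (show ρ ∈ Icc ‖B 0 ω - z‖ ‖B s ω - z‖ by simpa [hB0] using And.intro hρ hge)
    obtain ⟨u, hu, hu_eq⟩ := hivt
    exact hexit u ⟨hu.1, hu.2.trans hs.2⟩ hu_eq
  refine Or.inr ⟨fun s hs => hω s ⟨hs.1, hs.2.trans hT⟩, abs_lt.1 ?_⟩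
  calc |(B T ω - B T' ω).re| ≤ ‖(B T ω - z) - (B T' ω - z)‖ := by
        simpa using Complex.abs_re_le_norm (B T ω - B T' ω)
    _ ≤ ‖B T ω - z‖ + ‖B T' ω - z‖ := norm_sub_le _ _
    _ < ρ + ρ := add_lt_add (hinside T ⟨hT'.trans hT, le_rfl⟩) (hinside T' ⟨hT', hT⟩)
    _ = 2 * ρ := by ring

def BeurlingExitBound (c₀ : ℝ) : Prop :=
  ∀ (Ω : Type) (_ : MeasurableSpace Ω) (μ : Measure Ω), IsProbabilityMeasure μ →
    ∀ (B : ℝ → Ω → ℂ) (z : ℂ) (r t : ℝ) (γ : ℝ → ℂ),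
      IsPlanarBM μ B → (∀ ω, B 0 ω = z) → 0 < r → ‖z‖ ≤ r → 0 < t →
      Continuous γ → ‖γ 0‖ = r → Tendsto (fun s => ‖γ s‖) atTop atTop →
      (μ {ω | ∀ s ∈ Icc 0 (sigmaT B t ω), B s ω ∉ range γ}).toReal ≤ c₀ * √(r / √t)

def BeurlingFixedTimeBound (c : ℝ) : Prop :=
  ∀ (Ω : Type) (_ : MeasurableSpace Ω) (μ : Measure Ω), IsProbabilityMeasure μ →
    ∀ (B : ℝ → Ω → ℂ) (z : ℂ) (r t : ℝ) (γ : ℝ → ℂ),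
      IsPlanarBM μ B → (∀ ω, B 0 ω = z) → 0 < r → ‖z‖ ≤ r → 0 < t →
      Continuous γ → ‖γ 0‖ = r → Tendsto (fun s => ‖γ s‖) atTop atTop →
      (μ {ω | ∀ s ∈ Icc 0 t, B s ω ∉ range γ}).toReal ≤ c * √(r / √t)

namespace BeurlingExitBound

variable {c₀ : ℝ} {Ω : Type} [MeasurableSpace Ω] {μ : Measure Ω} [IsProbabilityMeasure μ]
  {B : ℝ → Ω → ℂ} {z : ℂ} {γ : ℝ → ℂ}

lemma measure_avoiding_inter_exit_le (hexit : BeurlingExitBound c₀) (hB : IsPlanarBM μ B)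
    (hB0 : ∀ ω, B 0 ω = z) (hγ : Continuous γ)
    (hγ_tendsto : Tendsto (fun s => ‖γ s‖) atTop atTop) (hγz : γ 0 ≠ z) {T τ : ℝ}
    (hτ : 0 < τ) :
    (μ (avoiding B (γ '' Ici 0) T ∩ {ω | ∃ s ∈ Icc 0 T, ‖B s ω - z‖ = √τ})).toReal
      ≤ c₀ * √(‖γ 0 - z‖ / √τ) := by
  set γ' : ℝ → ℂ := fun s => γ (max s 0) - z
  have hγ'_tendsto : Tendsto (fun s => ‖γ' s‖) atTop atTop := by
    refine tendsto_atTop_mono' _ ?_ (tendsto_atTop_add_const_right _ (-‖z‖) hγ_tendsto)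
    filter_upwards [eventually_ge_atTop 0] with s hs
    simpa only [γ', max_eq_left hs, ← sub_eq_add_neg] using norm_sub_norm_le (γ s) z
  have hbound := hexit Ω _ μ inferInstance (fun t ω => B t ω - z) 0 ‖γ 0 - z‖ τ γ'
    (hB.sub_const z) (by simp [hB0]) (norm_pos_iff.2 (sub_ne_zero.2 hγz))
    (by rw [norm_zero]; positivity) hτ (by fun_prop) (by simp [γ']) hγ'_tendsto
  refine le_trans (ENNReal.toReal_mono (measure_ne_top _ _) (measure_mono ?_)) hbound
  rintro ω ⟨havoid, s, hs, hs_exit⟩ u hu ⟨w, hw⟩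
  have hσ : sigmaT (fun t ω => B t ω - z) τ ω ≤ s := csInf_le ⟨0, fun _ h => h.1⟩ ⟨hs.1, hs_exit⟩
  exact havoid u ⟨hu.1, hu.2.trans (hσ.trans hs.2)⟩
    ⟨max w 0, mem_Ici.2 (le_max_right _ _), sub_left_inj.1 hw⟩

lemma measure_avoiding_le_half (hexit : BeurlingExitBound c₀) (hB : IsPlanarBM μ B)
    (hB0 : ∀ ω, B 0 ω = z) (hγ : Continuous γ)
    (hγ_tendsto : Tendsto (fun s => ‖γ s‖) atTop atTop) (hγz : γ 0 ≠ z) {T : ℝ}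
    (hT : 0 < T) :
    (μ (avoiding B (γ '' Ici 0) T)).toReal
      ≤ c₀ * √(4 * ‖γ 0 - z‖ / √T) + 4 / 7 * (μ (avoiding B (γ '' Ici 0) (T / 2))).toReal := by
  set K := γ '' Ici 0
  have hsqrt : √(T / 16) = √T / 4 := by
    rw [Real.sqrt_div hT.le, show (16 : ℝ) = 4 ^ 2 by norm_num, Real.sqrt_sq (by norm_num)]
  have hsplit := avoiding_subset_exit_union_stay hB.continuous_path hB0 K
    (Real.sqrt_nonneg (T / 16)) (half_pos hT).le (half_le_self hT.le)
  rw [hsqrt, show 2 * (√T / 4) = √T / 2 by ring] at hsplit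
  have hexit_le := hexit.measure_avoiding_inter_exit_le hB hB0 hγ hγ_tendsto hγz
    (T := T) (by positivity : 0 < T / 16)
  rw [hsqrt, div_div_eq_mul_div, mul_comm ‖γ 0 - z‖ 4] at hexit_le
  have hstay := hB.measure_avoiding_inter_re_increment hB0
    (isClosed_image_Ici_of_tendsto_norm hγ hγ_tendsto 0) (half_pos hT) (half_le_self hT.le)
    (measurableSet_Ioo (a := -(√T / 2)) (b := √T / 2))
  have hgauss := hB.measure_re_increment_mem_Ioo_le (half_pos hT).le (half_lt_self hT)
    (-(√T / 2)) (√T / 2)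
  have hprob : (√T / 2 - -(√T / 2)) / √(2 * Real.pi * (T - T / 2)) ≤ 4 / 7 := by
    have hπ : 7 / 4 ≤ √Real.pi := Real.le_sqrt_of_sq_le (by nlinarith [Real.pi_gt_d2])
    rw [show 2 * Real.pi * (T - T / 2) = Real.pi * T by ring, Real.sqrt_mul Real.pi_pos.le,
      div_le_iff₀ (by positivity)]
    nlinarith [Real.sqrt_pos.2 hT]
  calc (μ (avoiding B K T)).toReal
      ≤ (μ (avoiding B K T ∩ {ω | ∃ s ∈ Icc 0 T, ‖B s ω - z‖ = √T / 4})).toReal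
        + (μ (avoiding B K (T / 2) ∩
            {ω | (B T ω - B (T / 2) ω).re ∈ Ioo (-(√T / 2)) (√T / 2)})).toReal :=
        (ENNReal.toReal_mono (by finiteness) (measure_mono hsplit)).trans
          (measureReal_union_le _ _)
    _ ≤ c₀ * √(4 * ‖γ 0 - z‖ / √T) + 4 / 7 * (μ (avoiding B K (T / 2))).toReal := by
        rw [hstay, ENNReal.toReal_mul, mul_comm (4 / 7 : ℝ)]
        refine add_le_add hexit_le (mul_le_mul_of_nonneg_left ?_ ENNReal.toReal_nonneg)
        exact ENNReal.toReal_le_of_le_ofReal (by norm_num)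
          (hgauss.trans (ENNReal.ofReal_le_ofReal hprob))

end BeurlingExitBound

/-- The constant: `3 c₀ / (1 - (4/7)(6/5)) = 105 c₀ / 11 ≤ 10 c₀`. -/
lemma BeurlingExitBound.fixedTime {c₀ : ℝ} (hc₀ : 0 ≤ c₀) (hexit : BeurlingExitBound c₀) :
    BeurlingFixedTimeBound (10 * c₀) := by
  intro Ω _ μ _ B z r t γ hB hB0 _ hzr ht hγ hγ0 hγ_tendsto
  by_cases hγz : γ 0 = z
  · have hempty : {ω | ∀ s ∈ Icc 0 t, B s ω ∉ range γ} = ∅ :=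
      eq_empty_of_forall_notMem fun ω hω => hω 0 ⟨le_rfl, ht.le⟩ ⟨0, hγz.trans (hB0 ω).symm⟩
    rw [hempty, measure_empty, ENNReal.toReal_zero]
    positivity
  set H : ℕ → ℝ := fun k => (μ (avoiding B (γ '' Ici 0) (t / 2 ^ k))).toReal
  have hdist : ‖γ 0 - z‖ ≤ 2 * r := (norm_sub_le _ _).trans (by linarith)
  have hstep : ∀ k, H k ≤ 3 * c₀ * √(r / √t) * (6 / 5) ^ k + 4 / 7 * H (k + 1) := by
    intro k
    have hhalf := hexit.measure_avoiding_le_half hB hB0 hγ hγ_tendsto hγz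
      (by positivity : 0 < t / 2 ^ k)
    rw [div_div, ← pow_succ] at hhalf
    refine hhalf.trans (add_le_add_left ?_ _)
    calc c₀ * √(4 * ‖γ 0 - z‖ / √(t / 2 ^ k)) ≤ c₀ * (3 * (6 / 5) ^ k * √(r / √t)) :=
          mul_le_mul_of_nonneg_left
            (sqrt_div_sqrt_div_two_pow_le (norm_nonneg _) hdist ht k) hc₀
      _ = 3 * c₀ * √(r / √t) * (6 / 5) ^ k := by ring
  have hH0 := le_div_of_le_mul_pow_add_mul_succ (by positivity) (by norm_num) (by norm_num)
    (by norm_num) (by norm_num) (fun k => measureReal_le_one) hstep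
  calc (μ {ω | ∀ s ∈ Icc 0 t, B s ω ∉ range γ}).toReal ≤ H 0 := by
        refine ENNReal.toReal_mono (measure_ne_top _ _) (measure_mono fun ω hω s hs hsK => ?_)
        exact hω s (by simpa using hs) (image_subset_range _ _ hsK)
    _ ≤ 3 * c₀ * √(r / √t) / (1 - 4 / 7 * (6 / 5)) := hH0
    _ ≤ 10 * c₀ * √(r / √t) := by
        rw [div_le_iff₀ (by norm_num)]
        nlinarith [Real.sqrt_nonneg (r / √t), mul_nonneg hc₀ (Real.sqrt_nonneg (r / √t))]

/-- Beurling-type estimate at fixed times: assuming the Beurling projection estimate at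
the exit time `σ_t = inf{s : |B_s| = √t}`, there is a constant `c` such that for any
continuous curve `γ` with `|γ(0)| = r` and `|γ(t)| → ∞`, and any start `z` with
`|z| ≤ r`, a planar Brownian motion from `z` satisfies
`P^z{B[0,t] ∩ γ[0,∞) = ∅} ≤ c (r/√t)^{1/2}`. -/
theorem stmt11
    (hBeurling : ∃ c₀ : ℝ, 0 < c₀ ∧
      ∀ (Ω : Type) (_ : MeasurableSpace Ω) (μ : Measure Ω), IsProbabilityMeasure μ →
        ∀ (B : ℝ → Ω → ℂ) (z : ℂ) (r t : ℝ) (γ : ℝ → ℂ),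
          IsPlanarBM μ B → (∀ ω, B 0 ω = z) → 0 < r → ‖z‖ ≤ r → 0 < t →
          Continuous γ → ‖γ 0‖ = r →
          Filter.Tendsto (fun s => ‖γ s‖) Filter.atTop Filter.atTop →
          (μ {ω | ∀ s ∈ Set.Icc 0 (sigmaT B t ω), B s ω ∉ Set.range γ}).toReal
            ≤ c₀ * Real.sqrt (r / Real.sqrt t)) :
    ∃ c : ℝ, 0 < c ∧
      ∀ (Ω : Type) (_ : MeasurableSpace Ω) (μ : Measure Ω), IsProbabilityMeasure μ →
        ∀ (B : ℝ → Ω → ℂ) (z : ℂ) (r t : ℝ) (γ : ℝ → ℂ),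
          IsPlanarBM μ B → (∀ ω, B 0 ω = z) → 0 < r → ‖z‖ ≤ r → 0 < t →
          Continuous γ → ‖γ 0‖ = r →
          Filter.Tendsto (fun s => ‖γ s‖) Filter.atTop Filter.atTop →
          (μ {ω | ∀ s ∈ Set.Icc 0 t, B s ω ∉ Set.range γ}).toReal
            ≤ c * Real.sqrt (r / Real.sqrt t) := by
  obtain ⟨c₀, hc₀, hexit⟩ := hBeurling
  exact ⟨10 * c₀, by positivity, BeurlingExitBound.fixedTime hc₀.le hexit⟩
end

section
/- Gaussian tail comparison: for any A > 0 there exist c and ε > 0 such that for σ√n ≤ z ≤ εn, e^{A z³/n²} Φ̄(z/(σ√n)) ≤ Φ̄(z/(σ√n) - c z²/(σ n^{3/2})) and e^{-A z³/n²} Φ̄(z/(σ√n)) ≥ Φ̄(z/(σ√n) + c z²/(σ n^{3/2})), where Φ̄ = 1 - Φ is the standard normal upper tail. -/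
/-!
Translating the standard normal density gives `φ(x + δ) = e^{-xδ - δ²/2} φ(x) ≤ e^{-aδ} φ(x)`
for `x > a` and `δ ≥ 0`, hence `Φ̄(a + δ) ≤ e^{-aδ} Φ̄(a)` for every `a`. With
`s = z/(σ√n)` and shift `d = s t`, `t = c z/n ≤ 1/2`, the exponents `s d` and `(s - d) d ≥ s d / 2`
are at least `c z³/(2σ²n²) ≥ A z³/n²` once `c = 2AK²`.
-/

open MeasureTheory ProbabilityTheory Real Set

/-- The standard normal upper tail `Φ̄(s) = 1 - Φ(s)`. -/
noncomputable def Phibar (s : ℝ) : ℝ := ((gaussianReal 0 1) (Set.Ioi s)).toReal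

lemma Phibar_nonneg (s : ℝ) : 0 ≤ Phibar s := ENNReal.toReal_nonneg

lemma Phibar_eq_integral (s : ℝ) : Phibar s = ∫ x in Ioi s, gaussianPDFReal 0 1 x := by
  rw [Phibar, gaussianReal_apply_eq_integral 0 one_ne_zero, ENNReal.toReal_ofReal
    (setIntegral_nonneg measurableSet_Ioi fun x _ ↦ gaussianPDFReal_nonneg 0 1 x)]

lemma Phibar_add (a δ : ℝ) : Phibar (a + δ) = ∫ x in Ioi a, gaussianPDFReal 0 1 (x + δ) := by
  have h : (· - δ) ⁻¹' Ioi a = Ioi (a + δ) := by ext x; simp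
  rw [Phibar, ← h, ← Measure.map_apply (by fun_prop) measurableSet_Ioi,
    gaussianReal_map_sub_const, gaussianReal_apply_eq_integral _ one_ne_zero, ENNReal.toReal_ofReal
      (setIntegral_nonneg measurableSet_Ioi fun x _ ↦ gaussianPDFReal_nonneg _ 1 x)]
  simp_rw [gaussianPDFReal_add]

lemma gaussianPDFReal_add_eq_exp_mul (x δ : ℝ) :
    gaussianPDFReal 0 1 (x + δ) = exp (-(x * δ) - δ ^ 2 / 2) * gaussianPDFReal 0 1 x := by
  simp only [gaussianPDFReal, NNReal.coe_one, mul_one, mul_left_comm (exp _), ← exp_add]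
  ring_nf

lemma Phibar_add_le_exp_mul (a : ℝ) {δ : ℝ} (hδ : 0 ≤ δ) :
    Phibar (a + δ) ≤ exp (-(a * δ)) * Phibar a := by
  rw [Phibar_add, Phibar_eq_integral, ← integral_const_mul]
  refine setIntegral_mono_on ((integrable_gaussianPDFReal 0 1).comp_add_right δ).integrableOn
    ((integrable_gaussianPDFReal 0 1).const_mul _).integrableOn measurableSet_Ioi
    fun x hx ↦ ?_
  rw [gaussianPDFReal_add_eq_exp_mul]
  gcongr
  · exact gaussianPDFReal_nonneg 0 1 x
  nlinarith [mem_Ioi.1 hx]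

lemma exp_mul_Phibar_le_Phibar_sub (s : ℝ) {δ : ℝ} (hδ : 0 ≤ δ) :
    exp ((s - δ) * δ) * Phibar s ≤ Phibar (s - δ) := by
  have h := Phibar_add_le_exp_mul (s - δ) hδ
  rwa [sub_add_cancel, exp_neg, ← div_eq_inv_mul, le_div_iff₀' (exp_pos _)] at h

lemma exp_mul_Phibar_le_Phibar_sub_mul {s t L : ℝ} (hs : 0 ≤ s) (ht₀ : 0 ≤ t) (ht : t ≤ 1 / 2)
    (hL : L ≤ s ^ 2 * t / 2) :
    exp L * Phibar s ≤ Phibar (s - s * t) := by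
  refine le_trans ?_ (exp_mul_Phibar_le_Phibar_sub s (mul_nonneg hs ht₀))
  gcongr
  · exact Phibar_nonneg s
  nlinarith [mul_nonneg (sq_nonneg s) ht₀]

lemma Phibar_add_mul_le_exp_neg_mul {s t L : ℝ} (hs : 0 ≤ s) (ht₀ : 0 ≤ t)
    (hL : L ≤ s ^ 2 * t) :
    Phibar (s + s * t) ≤ exp (-L) * Phibar s := by
  refine (Phibar_add_le_exp_mul s (mul_nonneg hs ht₀)).trans ?_
  gcongr
  · exact Phibar_nonneg s
  nlinarith

/-- Gaussian tail comparison: for any `A > 0` (and `σ` bounded above and below by fixed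
positive constants) there exist `c` and `ε > 0` such that for `σ√n ≤ z ≤ εn`,
`e^{A z³/n²} Φ̄(z/(σ√n)) ≤ Φ̄(z/(σ√n) - c z²/(σ n^{3/2}))` and
`e^{-A z³/n²} Φ̄(z/(σ√n)) ≥ Φ̄(z/(σ√n) + c z²/(σ n^{3/2}))`. -/
theorem stmt16 (A K : ℝ) (hA : 0 < A) (hK : 1 ≤ K) :
    ∃ c : ℝ, 0 < c ∧ ∃ ε : ℝ, 0 < ε ∧
      ∀ σ : ℝ, 1 / K ≤ σ → σ ≤ K → ∀ n : ℕ, 1 ≤ n → ∀ z : ℝ,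
        σ * Real.sqrt n ≤ z → z ≤ ε * n →
        (Real.exp (A * z ^ 3 / (n : ℝ) ^ 2) * Phibar (z / (σ * Real.sqrt n))
            ≤ Phibar (z / (σ * Real.sqrt n) - c * z ^ 2 / (σ * (n : ℝ) ^ ((3 : ℝ) / 2))))
        ∧ (Real.exp (-A * z ^ 3 / (n : ℝ) ^ 2) * Phibar (z / (σ * Real.sqrt n))
            ≥ Phibar (z / (σ * Real.sqrt n) + c * z ^ 2 / (σ * (n : ℝ) ^ ((3 : ℝ) / 2)))) := by
  have hK₀ : 0 < K := by linarith
  refine ⟨2 * A * K ^ 2, by positivity, 1 / (4 * A * K ^ 2), by positivity,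
    fun σ hσ₁ hσ₂ n hn z hz₁ hz₂ ↦ ?_⟩
  have hσ : 0 < σ := (one_div_pos.2 hK₀).trans_le hσ₁
  have hn₀ : (0 : ℝ) < n := by exact_mod_cast hn
  have hσn : 0 < σ * √(n : ℝ) := mul_pos hσ (sqrt_pos.2 hn₀)
  have hz : 0 ≤ z := hσn.le.trans hz₁
  have hs : 0 ≤ z / (σ * √n) := div_nonneg hz hσn.le
  have hshift : 2 * A * K ^ 2 * z ^ 2 / (σ * (n : ℝ) ^ ((3 : ℝ) / 2))
      = z / (σ * √n) * (2 * A * K ^ 2 * z / n) := by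
    rw [show (3 : ℝ) / 2 = 1 + 1 / 2 by norm_num, rpow_add hn₀, rpow_one, ← sqrt_eq_rpow]
    field_simp
  have ht₀ : 0 ≤ 2 * A * K ^ 2 * z / n := by positivity
  have ht : 2 * A * K ^ 2 * z / n ≤ 1 / 2 := by
    rw [div_le_iff₀ hn₀]
    rw [div_mul_eq_mul_div, le_div_iff₀ (by positivity)] at hz₂
    nlinarith
  have hL : A * z ^ 3 / n ^ 2 ≤ (z / (σ * √n)) ^ 2 * (2 * A * K ^ 2 * z / n) / 2 := by
    have hKσ : 1 ≤ K ^ 2 / σ ^ 2 := by rw [one_le_div (by positivity)]; gcongr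
    calc A * z ^ 3 / n ^ 2 ≤ K ^ 2 / σ ^ 2 * (A * z ^ 3 / n ^ 2) :=
          le_mul_of_one_le_left (by positivity) hKσ
      _ = _ := by
          rw [div_pow, mul_pow, sq_sqrt hn₀.le]
          field_simp
  rw [hshift, neg_mul, neg_div]
  exact ⟨exp_mul_Phibar_le_Phibar_sub_mul hs ht₀ ht hL,
    Phibar_add_mul_le_exp_neg_mul hs ht₀ (hL.trans (half_le_self (by positivity)))⟩
end

section
/- Bound on the conditioned walk's midpoint distribution: there exist c₂, b₂, ε₀ > 0 such that for every integer n ≥ 2, every integer m with |2m - n| ≤ 1, every z ∈ L_n with |z| ≤ ε₀ n, and every w ∈ Z, P{S_m = w | S_n = z} ≤ c₂ n^{-1/2} exp{ -b₂ (w - z/2)² / n }. -/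
/-!
Conditioned on `S_n = 2k - n`, the number of up-steps among the first `m` steps is
hypergeometric: `P{S_m = 2j - m | S_n = 2k - n} = C(m,j) C(n-m,k-j) / C(n,k)`. Consecutive
weights `h x = C(m,x) C(n-m,k-x)` satisfy `(x+1)(n-m-k+x+1) h(x+1) = (m-x)(k-x) h(x)`, and the two
coefficients differ by the linear function `(n+2)(x - μ)`. So `h(x+1)/h(x) ≤ exp(-(x-μ)/n)` above
`μ` and symmetrically below it, which multiplies up to Gaussian decay `exp(-(j-μ)²/(4n))` away
from `⌈μ⌉`. When `m` and `k` are close to `n/2` both coefficients are of order `n²`, so the ratio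
stays `1 - O(1/√n)` over `√n/8` steps above `⌈μ⌉`; these weights are all at least `h ⌈μ⌉ / 2`
and sum to at most `C(n,k)`, hence `h ⌈μ⌉ ≤ 16 C(n,k)/√n`. Finally `w - z/2 = 2(j - c)` for the
centre `c = (m+k)/2 - n/4`, which lies within `1` of `μ`; small `n` are absorbed into the
constant.
-/

open Finset

/-- Position after the first `k` steps of a `±1` walk encoded by `f`. -/
def walkSum (n : ℕ) (f : Fin n → Bool) (k : ℕ) : ℤ :=
  ∑ i ∈ Finset.univ.filter (fun i : Fin n => (i : ℕ) < k), (if f i then (1 : ℤ) else -1)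

open Real

section Counting

theorem card_filter_fun_bool {α : Type*} [Fintype α] [DecidableEq α] (P : Finset α → Prop)
    [DecidablePred P] : #{f : α → Bool | P ({i | f i} : Finset α)} = #{s : Finset α | P s} := by
  refine card_bij' (fun f _ => ({i | f i} : Finset α)) (fun s _ => fun i => decide (i ∈ s))
    ?_ ?_ ?_ ?_
  · intro f hf; simpa using hf
  · intro s hs; simpa [filter_mem_eq_inter] using hs
  · intro f _; funext i; simp
  · intro s _; ext i; simp

theorem card_filter_card_inter_eq_and_card_eq {α : Type*} [Fintype α] [DecidableEq α]
    (S : Finset α) {j k : ℕ} (hjk : j ≤ k) :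
    #{s : Finset α | #(s ∩ S) = j ∧ #s = k} = (#S).choose j * (#Sᶜ).choose (k - j) := by
  rw [← card_powersetCard, ← card_powersetCard, ← card_product]
  refine card_bij' (fun s _ => (s ∩ S, s \ S)) (fun p _ => p.1 ∪ p.2) ?_ ?_ ?_ ?_
  · intro s hs
    simp only [mem_filter, mem_univ, true_and] at hs
    have := card_sdiff_add_card_inter s S
    simp only [mem_product, mem_powersetCard]
    refine ⟨⟨inter_subset_right, hs.1⟩, ⟨fun x hx => ?_, by omega⟩⟩
    simp only [mem_sdiff] at hx; simpa using hx.2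
  · rintro ⟨a, b⟩ hab
    simp only [mem_product, mem_powersetCard] at hab
    obtain ⟨⟨haS, ha⟩, hbS, hb⟩ := hab
    have hbS' : Disjoint b S := disjoint_of_subset_left hbS disjoint_compl_left
    simp only [mem_filter, mem_univ, true_and]
    refine ⟨?_, ?_⟩
    · rw [union_inter_distrib_right, inter_eq_left.mpr haS,
        disjoint_iff_inter_eq_empty.mp hbS', union_empty, ha]
    · rw [card_union_of_disjoint (disjoint_of_subset_left haS hbS'.symm)]; omega
  · intro s _
    rw [union_comm, sdiff_union_inter]
  · rintro ⟨a, b⟩ hab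
    simp only [mem_product, mem_powersetCard] at hab
    obtain ⟨⟨haS, -⟩, hbS, -⟩ := hab
    have hbS' : Disjoint b S := disjoint_of_subset_left hbS disjoint_compl_left
    rw [union_inter_distrib_right, inter_eq_left.mpr haS, disjoint_iff_inter_eq_empty.mp hbS',
      union_empty, union_sdiff_distrib, sdiff_eq_empty_iff_subset.mpr haS, hbS'.sdiff_eq_left,
      empty_union]

variable {n : ℕ}

theorem walkSum_eq (f : Fin n → Bool) {r : ℕ} (hr : r ≤ n) :
    walkSum n f r
      = 2 * #(({i | f i} : Finset (Fin n)) ∩ ({i | (i : ℕ) < r} : Finset (Fin n))) - r := by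
  have hcard : #{i : Fin n | (i : ℕ) < r} = r := by
    rw [Fin.card_filter_val_lt, min_eq_right hr]
  have hsplit := card_filter_add_card_filter_not (s := ({i | (i : ℕ) < r} : Finset (Fin n)))
    (f · = true)
  have hinter : ({i | f i} : Finset (Fin n)) ∩ ({i | (i : ℕ) < r} : Finset (Fin n))
      = ({i | (i : ℕ) < r ∧ f i} : Finset (Fin n)) := by
    ext; simp [and_comm]
  unfold walkSum
  rw [sum_ite, sum_const, sum_const, filter_filter, filter_filter] at *
  rw [hinter, nsmul_eq_mul, nsmul_eq_mul]
  omega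

theorem exists_walkSum_eq {m : ℕ} (hmn : m ≤ n) (f : Fin n → Bool) :
    ∃ j k : ℕ, j ≤ m ∧ j ≤ k ∧ k ≤ n ∧
      walkSum n f m = 2 * j - m ∧ walkSum n f n = 2 * k - n := by
  set U : Finset (Fin n) := {i | f i}
  set S : Finset (Fin n) := {i | (i : ℕ) < m}
  have huniv : ({i | (i : ℕ) < n} : Finset (Fin n)) = univ := by ext i; simp
  refine ⟨#(U ∩ S), #U, ?_, card_le_card inter_subset_left, ?_, walkSum_eq f hmn, ?_⟩
  · calc #(U ∩ S) ≤ #S := card_le_card inter_subset_right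
      _ = m := by rw [Fin.card_filter_val_lt, min_eq_right hmn]
  · simpa using card_le_univ U
  · rw [walkSum_eq f le_rfl, huniv, inter_univ]

theorem card_walkSum_eq_and_walkSum_eq {m j k : ℕ} (hmn : m ≤ n) (hjk : j ≤ k) :
    #{f : Fin n → Bool | walkSum n f m = 2 * j - m ∧ walkSum n f n = 2 * k - n}
      = m.choose j * (n - m).choose (k - j) := by
  set S : Finset (Fin n) := {i | (i : ℕ) < m} with hSdef
  have hS : #S = m := by rw [Fin.card_filter_val_lt, min_eq_right hmn]
  have hSc : #Sᶜ = n - m := by rw [card_compl, Fintype.card_fin, hS]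
  have huniv : ({i | (i : ℕ) < n} : Finset (Fin n)) = univ := by ext i; simp
  rw [← hSc]
  conv_rhs => rw [← hS]
  rw [← card_filter_card_inter_eq_and_card_eq S hjk, ← card_filter_fun_bool]
  refine congrArg card (filter_congr fun f _ => ?_)
  rw [walkSum_eq f hmn, walkSum_eq f le_rfl, huniv, inter_univ, ← hSdef]
  omega

theorem card_walkSum_eq {k : ℕ} :
    #{f : Fin n → Bool | walkSum n f n = 2 * k - n} = n.choose k := by
  simpa [walkSum] using
    card_walkSum_eq_and_walkSum_eq (m := 0) (j := 0) (k := k) (Nat.zero_le n) (Nat.zero_le k)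

end Counting

theorem Nat.cast_choose_succ_mul {R : Type*} [CommRing R] (N K : ℕ) :
    (N.choose (K + 1) : R) * (K + 1) = N.choose K * ((N : R) - K) := by
  rcases le_or_gt K N with hKN | hNK
  · have := congrArg (fun t : ℕ => (t : R)) (Nat.choose_succ_right_eq N K)
    push_cast [Nat.cast_sub hKN] at this
    exact this
  · rw [Nat.choose_eq_zero_of_lt hNK, Nat.choose_eq_zero_of_lt (by omega)]
    simp

theorem sum_range_const_add_cast (c : ℝ) (S : ℕ) :
    ∑ s ∈ range S, (c + s) = S * c + S * (S - 1) / 2 := by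
  induction S with
  | zero => simp
  | succ S ih => rw [sum_range_succ, ih]; push_cast; ring

theorem le_exp_neg_sum_mul_of_succ_le (g : ℕ → ℝ) (a : ℕ → ℝ) (S : ℕ)
    (h : ∀ s < S, g (s + 1) ≤ exp (-a s) * g s) :
    g S ≤ exp (-∑ s ∈ range S, a s) * g 0 := by
  induction S with
  | zero => simp
  | succ S ih =>
    calc g (S + 1) ≤ exp (-a S) * g S := h S (by omega)
      _ ≤ exp (-a S) * (exp (-∑ s ∈ range S, a s) * g 0) := by
        gcongr
        exact ih fun s hs => h s (by omega)
      _ = exp (-∑ s ∈ range (S + 1), a s) * g 0 := by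
        rw [sum_range_succ, ← mul_assoc, ← exp_add]; ring_nf

theorem mul_le_sum_range_of_le_succ (g : ℕ → ℝ) {δ : ℝ} (hδ0 : 0 ≤ δ) (hδ1 : δ ≤ 1) {L : ℕ}
    (hg : 0 ≤ g 0) (h : ∀ s < L, (1 - δ) * g s ≤ g (s + 1)) :
    (L + 1) * ((1 - L * δ) * g 0) ≤ ∑ s ∈ range (L + 1), g s := by
  have hpow : ∀ s ≤ L, (1 - δ) ^ s * g 0 ≤ g s := by
    intro s hs
    induction s with
    | zero => simp
    | succ s ih =>
      calc (1 - δ) ^ (s + 1) * g 0 = (1 - δ) * ((1 - δ) ^ s * g 0) := by ring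
        _ ≤ (1 - δ) * g s := mul_le_mul_of_nonneg_left (ih (by omega)) (by linarith)
        _ ≤ g (s + 1) := h s (by omega)
  have hterm : ∀ s ∈ range (L + 1), (1 - L * δ) * g 0 ≤ g s := by
    intro s hs
    have hsL : s ≤ L := Nat.lt_succ_iff.mp (mem_range.mp hs)
    refine le_trans (mul_le_mul_of_nonneg_right ?_ hg) (hpow s hsL)
    have hsδ : (s : ℝ) * δ ≤ L * δ := by gcongr
    have bernoulli := one_add_mul_le_pow (a := -δ) (by linarith) s
    rw [← sub_eq_add_neg] at bernoulli
    linarith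
  simpa using card_nsmul_le_sum _ _ _ hterm

/-- `P{S_m = 2x - m | S_n = 2k - n} = hyperWeight n m k x / C(n,k)`. Only meaningful for
`x ≤ k`: beyond it `k - x` truncates to `0`. -/
noncomputable def hyperWeight (n m k x : ℕ) : ℝ := m.choose x * (n - m).choose (k - x)

/-- The root of the linear function in `succ_mul_sub_mul_eq_mul_sub_hyperMode`;
`⌈hyperMode n m k⌉₊` is a mode of `hyperWeight n m k`. -/
noncomputable def hyperMode (n m k : ℕ) : ℝ := ((m : ℝ) * k + m + k - n - 1) / (n + 2)

section HyperWeight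

variable {n m k : ℕ}

theorem hyperWeight_nonneg (x : ℕ) : 0 ≤ hyperWeight n m k x := by
  unfold hyperWeight; positivity

theorem choose_eq_sum_hyperWeight (hmn : m ≤ n) :
    (n.choose k : ℝ) = ∑ x ∈ range (k + 1), hyperWeight n m k x := by
  have hv := Nat.add_choose_eq m (n - m) k
  rw [Nat.add_sub_cancel' hmn] at hv
  rw [hv, Nat.sum_antidiagonal_eq_sum_range_succ_mk]
  push_cast
  rfl

theorem hyperWeight_le_choose (hmn : m ≤ n) {j : ℕ} (hjk : j ≤ k) :
    hyperWeight n m k j ≤ n.choose k := by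
  rw [choose_eq_sum_hyperWeight hmn]
  exact single_le_sum (fun x _ => hyperWeight_nonneg x) (mem_range.mpr (by omega))

theorem hyperWeight_succ (hmn : m ≤ n) {x : ℕ} (hxk : x < k) :
    ((x : ℝ) + 1) * (n - m - k + x + 1) * hyperWeight n m k (x + 1)
      = ((m : ℝ) - x) * (k - x) * hyperWeight n m k x := by
  have hm := Nat.cast_choose_succ_mul (R := ℝ) m x
  have hnm := Nat.cast_choose_succ_mul (R := ℝ) (n - m) (k - (x + 1))
  rw [show k - (x + 1) + 1 = k - x by omega, Nat.cast_sub hmn,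
    Nat.cast_sub (show x + 1 ≤ k by omega)] at hnm
  unfold hyperWeight
  push_cast at hnm
  linear_combination (((n - m).choose (k - (x + 1)) : ℝ) * ((n : ℝ) - m - k + x + 1)) * hm
    - (m.choose x : ℝ) * (m - x) * hnm

theorem succ_mul_sub_mul_eq_mul_sub_hyperMode (x : ℝ) :
    (x + 1) * (n - m - k + x + 1) - (m - x) * (k - x)
      = ((n : ℝ) + 2) * (x - hyperMode n m k) := by
  unfold hyperMode
  field_simp
  ring

theorem hyperMode_le_left (hkn : k ≤ n) : hyperMode n m k ≤ m := by
  unfold hyperMode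
  rw [div_le_iff₀ (by positivity)]
  have : (k : ℝ) ≤ n := by exact_mod_cast hkn
  nlinarith

theorem hyperMode_le_right (hmn : m ≤ n) : hyperMode n m k ≤ k := by
  unfold hyperMode
  rw [div_le_iff₀ (by positivity)]
  have : (m : ℝ) ≤ n := by exact_mod_cast hmn
  nlinarith

theorem neg_one_lt_hyperMode : -1 < hyperMode n m k := by
  unfold hyperMode
  rw [lt_div_iff₀ (by positivity)]
  nlinarith [(Nat.cast_nonneg m : (0 : ℝ) ≤ m), (Nat.cast_nonneg k : (0 : ℝ) ≤ k)]

theorem ceil_hyperMode_lt : (⌈hyperMode n m k⌉₊ : ℝ) < hyperMode n m k + 1 := by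
  rcases le_or_gt 0 (hyperMode n m k) with h | h
  · exact Nat.ceil_lt_add_one h
  · rw [Nat.ceil_eq_zero.mpr h.le, Nat.cast_zero]
    linarith [neg_one_lt_hyperMode (n := n) (m := m) (k := k)]

theorem hyperWeight_succ_le (hmn : m ≤ n) {x : ℕ} (hxm : x < m) (hxk : x < k)
    (hx : hyperMode n m k ≤ x) :
    hyperWeight n m k (x + 1) ≤ exp (-((x - hyperMode n m k) / n)) * hyperWeight n m k x := by
  set μ := hyperMode n m k
  set A : ℝ := ((x : ℝ) + 1) * (n - m - k + x + 1)
  have hxm' : (x : ℝ) + 1 ≤ m := by exact_mod_cast hxm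
  have hxk' : (x : ℝ) + 1 ≤ k := by exact_mod_cast hxk
  have hmn' : (m : ℝ) ≤ n := by exact_mod_cast hmn
  have hB : 0 < ((m : ℝ) - x) * (k - x) := by nlinarith
  have hAB := succ_mul_sub_mul_eq_mul_sub_hyperMode (n := n) (m := m) (k := k) x
  have hA : 0 < A := by nlinarith
  have hAn : A ≤ n * (n + 2) := by
    have : (0 : ℝ) < n - m - k + x + 1 := by nlinarith
    nlinarith
  have hn : (0 : ℝ) < n := by linarith
  refine le_of_mul_le_mul_left ?_ hA
  calc A * hyperWeight n m k (x + 1)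
      = (A - (n + 2) * (x - μ)) * hyperWeight n m k x := by
        rw [hyperWeight_succ hmn hxk]; congr 1; linarith
    _ ≤ A * (1 - (x - μ) / n) * hyperWeight n m k x := by
        gcongr ?_ * _
        · exact hyperWeight_nonneg x
        have : A * ((x - μ) / n) ≤ (n + 2) * (x - μ) := by
          rw [mul_div_assoc', div_le_iff₀ hn]; nlinarith
        linarith
    _ ≤ A * (exp (-((x - μ) / n)) * hyperWeight n m k x) := by
        rw [← mul_assoc]
        gcongr
        · exact hyperWeight_nonneg x
        exact one_sub_le_exp_neg _

theorem hyperWeight_le_succ (hmn : m ≤ n) (hkn : k ≤ n) {x : ℕ} (hxm : x < m) (hxk : x < k)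
    (hx : x ≤ hyperMode n m k) :
    hyperWeight n m k x ≤ exp (-((hyperMode n m k - x) / n)) * hyperWeight n m k (x + 1) := by
  set μ := hyperMode n m k
  set B : ℝ := ((m : ℝ) - x) * (k - x)
  have hxm' : (x : ℝ) + 1 ≤ m := by exact_mod_cast hxm
  have hxk' : (x : ℝ) + 1 ≤ k := by exact_mod_cast hxk
  have hmn' : (m : ℝ) ≤ n := by exact_mod_cast hmn
  have hkn' : (k : ℝ) ≤ n := by exact_mod_cast hkn
  have hB : 0 < B := by nlinarith
  have hAB := succ_mul_sub_mul_eq_mul_sub_hyperMode (n := n) (m := m) (k := k) x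
  have hBn : B ≤ n * (n + 2) := by nlinarith
  have hn : (0 : ℝ) < n := by linarith
  refine le_of_mul_le_mul_left ?_ hB
  calc B * hyperWeight n m k x
      = (B - (n + 2) * (μ - x)) * hyperWeight n m k (x + 1) := by
        rw [← hyperWeight_succ hmn hxk]; congr 1; linarith
    _ ≤ B * (1 - (μ - x) / n) * hyperWeight n m k (x + 1) := by
        gcongr ?_ * _
        · exact hyperWeight_nonneg _
        have : B * ((μ - x) / n) ≤ (n + 2) * (μ - x) := by
          rw [mul_div_assoc', div_le_iff₀ hn]; nlinarith
        linarith
    _ ≤ B * (exp (-((μ - x) / n)) * hyperWeight n m k (x + 1)) := by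
        rw [← mul_assoc]
        gcongr
        · exact hyperWeight_nonneg _
        exact one_sub_le_exp_neg _

theorem hyperWeight_ceil_add_le (hmn : m ≤ n) {S : ℕ} (hSm : ⌈hyperMode n m k⌉₊ + S ≤ m)
    (hSk : ⌈hyperMode n m k⌉₊ + S ≤ k) :
    hyperWeight n m k (⌈hyperMode n m k⌉₊ + S) ≤
      exp (-∑ s ∈ range S, ((⌈hyperMode n m k⌉₊ - hyperMode n m k) + s) / n) *
        hyperWeight n m k ⌈hyperMode n m k⌉₊ := by
  set μ := hyperMode n m k
  have hμJ : μ ≤ ⌈μ⌉₊ := Nat.le_ceil μ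
  simpa using le_exp_neg_sum_mul_of_succ_le (fun s => hyperWeight n m k (⌈μ⌉₊ + s))
    (fun s => ((⌈μ⌉₊ - μ) + s) / n) S fun s hs => by
      have := hyperWeight_succ_le (k := k) hmn (x := ⌈μ⌉₊ + s) (by omega) (by omega)
        (by push_cast; linarith [(Nat.cast_nonneg s : (0 : ℝ) ≤ s)])
      simpa [add_assoc, add_sub_right_comm] using this

theorem hyperWeight_ceil_sub_le (hmn : m ≤ n) (hkn : k ≤ n) {S : ℕ}
    (hS : S ≤ ⌈hyperMode n m k⌉₊) :
    hyperWeight n m k (⌈hyperMode n m k⌉₊ - S) ≤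
      exp (-∑ s ∈ range S, ((hyperMode n m k - ⌈hyperMode n m k⌉₊ + 1) + s) / n) *
        hyperWeight n m k ⌈hyperMode n m k⌉₊ := by
  set μ := hyperMode n m k
  have hJm : ⌈μ⌉₊ ≤ m := Nat.ceil_le.mpr (hyperMode_le_left hkn)
  have hJk : ⌈μ⌉₊ ≤ k := Nat.ceil_le.mpr (hyperMode_le_right hmn)
  have hJμ : (⌈μ⌉₊ : ℝ) < μ + 1 := ceil_hyperMode_lt
  simpa using le_exp_neg_sum_mul_of_succ_le (fun s => hyperWeight n m k (⌈μ⌉₊ - s))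
    (fun s => ((μ - ⌈μ⌉₊ + 1) + s) / n) S fun s hs => by
      have hx : ((⌈μ⌉₊ - (s + 1) : ℕ) : ℝ) = ⌈μ⌉₊ - (s + 1) := by
        rw [Nat.cast_sub (by omega)]; push_cast; ring
      have := hyperWeight_le_succ (k := k) hmn hkn (x := ⌈μ⌉₊ - (s + 1)) (by omega) (by omega)
        (by rw [hx]; linarith [(Nat.cast_nonneg s : (0 : ℝ) ≤ s)])
      rw [show ⌈μ⌉₊ - (s + 1) + 1 = ⌈μ⌉₊ - s by omega, hx] at this
      convert this using 4; ring

theorem hyperWeight_le_exp_mul_hyperWeight_ceil (hmn : m ≤ n) (hkn : k ≤ n) {j : ℕ}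
    (hjm : j ≤ m) (hjk : j ≤ k) :
    hyperWeight n m k j ≤
      exp ((2 - (j - hyperMode n m k) ^ 2 / 4) / n) * hyperWeight n m k ⌈hyperMode n m k⌉₊ := by
  set μ := hyperMode n m k with hμ
  set J := ⌈μ⌉₊ with hJ
  -- `j` is `S` steps away from `J`, and the `s`-th step shrinks the weight by `exp (-(c + s) / n)`
  suffices key : ∃ (S : ℕ) (c : ℝ), 0 ≤ c ∧ |(j : ℝ) - μ| ≤ S + 1 ∧
      hyperWeight n m k j ≤ exp (-∑ s ∈ range S, (c + s) / n) * hyperWeight n m k J by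
    obtain ⟨S, c, hc, hjS, hj⟩ := key
    refine hj.trans (mul_le_mul_of_nonneg_right (exp_le_exp.mpr ?_) (hyperWeight_nonneg J))
    rw [← sum_div, sum_range_const_add_cast, ← neg_div]
    apply div_le_div_of_nonneg_right _ (Nat.cast_nonneg n)
    have : ((j : ℝ) - μ) ^ 2 ≤ (S + 1) ^ 2 := by
      rw [← sq_abs]; exact pow_le_pow_left₀ (abs_nonneg _) hjS 2
    nlinarith [mul_nonneg (Nat.cast_nonneg S : (0 : ℝ) ≤ S) hc, sq_nonneg ((S : ℝ) - 2)]
  have hμJ : μ ≤ J := Nat.le_ceil μ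
  have hJμ : (J : ℝ) < μ + 1 := ceil_hyperMode_lt
  rcases le_or_gt J j with hJj | hjJ
  · have hJj' : (J : ℝ) ≤ j := by exact_mod_cast hJj
    refine ⟨j - J, J - μ, by linarith, ?_, ?_⟩
    · rw [Nat.cast_sub hJj, abs_le]; constructor <;> linarith
    · have h := hyperWeight_ceil_add_le (k := k) hmn (S := j - J)
        (show J + (j - J) ≤ m by omega) (show J + (j - J) ≤ k by omega)
      rwa [← hμ, ← hJ, Nat.add_sub_cancel' hJj] at h
  · have hjJ' : (j : ℝ) + 1 ≤ J := by exact_mod_cast hjJ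
    refine ⟨J - j, μ - J + 1, by linarith, ?_, ?_⟩
    · rw [Nat.cast_sub hjJ.le, abs_le]; constructor <;> linarith
    · have h := hyperWeight_ceil_sub_le hmn hkn (S := J - j) (show J - j ≤ J by omega)
      rwa [← hμ, ← hJ, Nat.sub_sub_self hjJ.le] at h

theorem one_sub_mul_hyperWeight_le_succ (hmn : m ≤ n) {x : ℕ} (hxk : x < k) {δ : ℝ}
    (hA : 0 < ((x : ℝ) + 1) * (n - m - k + x + 1))
    (hδ : ((n : ℝ) + 2) * (x - hyperMode n m k) ≤ δ * (((x : ℝ) + 1) * (n - m - k + x + 1))) :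
    (1 - δ) * hyperWeight n m k x ≤ hyperWeight n m k (x + 1) := by
  refine le_of_mul_le_mul_left ?_ hA
  rw [hyperWeight_succ hmn hxk, ← mul_assoc]
  gcongr ?_ * _
  · exact hyperWeight_nonneg x
  linarith [succ_mul_sub_mul_eq_mul_sub_hyperMode (n := n) (m := m) (k := k) x]

theorem abs_hyperMode_sub_le (hm : |2 * (m : ℝ) - n| ≤ 1) (hk : |2 * (k : ℝ) - n| ≤ n / 16) :
    |hyperMode n m k - ((m + k) / 2 - n / 4)| ≤ 1 := by
  have hn : (0 : ℝ) < n + 2 := by positivity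
  have hsub : hyperMode n m k - ((m + k) / 2 - n / 4)
      = ((m - n / 2) * (k - n / 2) - n / 2 - 1) / (n + 2) := by
    unfold hyperMode; field_simp; ring
  have hprod : |((m : ℝ) - n / 2) * (k - n / 2)| ≤ n / 64 := by
    rw [abs_mul]
    calc |(m : ℝ) - n / 2| * |(k : ℝ) - n / 2| ≤ (1 / 2) * (n / 32) := by
          gcongr
          · rw [show (m : ℝ) - n / 2 = (2 * m - n) / 2 by ring, abs_div]; norm_num; linarith
          · rw [show (k : ℝ) - n / 2 = (2 * k - n) / 2 by ring, abs_div]; norm_num; linarith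
      _ = n / 64 := by ring
  rw [hsub, abs_div, abs_of_pos hn, div_le_one hn]
  have := abs_sub (((m : ℝ) - n / 2) * (k - n / 2)) (n / 2 + 1)
  rw [abs_of_pos (by positivity : (0 : ℝ) < n / 2 + 1)] at this
  rw [sub_sub]
  linarith

theorem ceil_hyperMode_add_lt (hn : 4096 ≤ n) (hm : |2 * (m : ℝ) - n| ≤ 1)
    (hk : |2 * (k : ℝ) - n| ≤ n / 16) {L : ℕ} (hL : (L : ℝ) ≤ n / 512) :
    ⌈hyperMode n m k⌉₊ + L < m ∧ ⌈hyperMode n m k⌉₊ + L < k := by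
  have hnr : (4096 : ℝ) ≤ n := by exact_mod_cast hn
  obtain ⟨hm1, hm2⟩ := abs_le.mp hm
  obtain ⟨hk1, hk2⟩ := abs_le.mp hk
  obtain ⟨hμ1, hμ2⟩ := abs_le.mp (abs_hyperMode_sub_le hm hk)
  have hJμ : (⌈hyperMode n m k⌉₊ : ℝ) < hyperMode n m k + 1 := ceil_hyperMode_lt
  constructor
  · have : ((⌈hyperMode n m k⌉₊ + L : ℕ) : ℝ) < m := by push_cast; linarith
    exact_mod_cast this
  · have : ((⌈hyperMode n m k⌉₊ + L : ℕ) : ℝ) < k := by push_cast; linarith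
    exact_mod_cast this

theorem one_sub_mul_hyperWeight_ceil_add_le (hn : 4096 ≤ n) (hm : |2 * (m : ℝ) - n| ≤ 1)
    (hk : |2 * (k : ℝ) - n| ≤ n / 16) {L : ℕ} (hL : (L : ℝ) ≤ n / 512) :
    ∀ s < L, (1 - 26 * (L + 1) / n) * hyperWeight n m k (⌈hyperMode n m k⌉₊ + s)
      ≤ hyperWeight n m k (⌈hyperMode n m k⌉₊ + s + 1) := by
  intro s hs
  have hJL := (ceil_hyperMode_add_lt hn hm hk hL).2
  set μ := hyperMode n m k
  set x := ⌈μ⌉₊ + s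
  have hnr : (4096 : ℝ) ≤ n := by exact_mod_cast hn
  obtain ⟨hm1, hm2⟩ := abs_le.mp hm
  obtain ⟨hk1, hk2⟩ := abs_le.mp hk
  obtain ⟨hμ1, hμ2⟩ := abs_le.mp (abs_hyperMode_sub_le hm hk)
  have hμJ : μ ≤ ⌈μ⌉₊ := Nat.le_ceil μ
  have hJμ : (⌈μ⌉₊ : ℝ) < μ + 1 := ceil_hyperMode_lt
  have hs' : (s : ℝ) + 1 ≤ L := by exact_mod_cast hs
  have hmn : m ≤ n := by exact_mod_cast (show (m : ℝ) ≤ n by linarith)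
  have hxk : x < k := by omega
  have hx1 : (15 / 64 : ℝ) * n - 1 / 4 ≤ x + 1 := by simp only [x]; push_cast; linarith
  have hx2 : (13 / 64 : ℝ) * n - 3 / 4 ≤ n - m - k + x + 1 := by simp only [x]; push_cast; linarith
  have hA : (n : ℝ) ^ 2 / 25 ≤ (x + 1) * (n - m - k + x + 1) := by
    calc (n : ℝ) ^ 2 / 25 ≤ ((15 / 64 : ℝ) * n - 1 / 4) * ((13 / 64 : ℝ) * n - 3 / 4) := by
          nlinarith
      _ ≤ _ := mul_le_mul hx1 hx2 (by linarith) (by linarith)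
  refine one_sub_mul_hyperWeight_le_succ hmn hxk (by nlinarith) ?_
  have hxμ : (x : ℝ) - μ ≤ L + 1 := by simp only [x]; push_cast; linarith
  calc ((n : ℝ) + 2) * (x - μ) ≤ (n + 2) * (L + 1) := by gcongr
    _ ≤ 26 * (L + 1) / n * (n ^ 2 / 25) := by
      rw [div_mul_div_comm, le_div_iff₀ (by positivity)]; nlinarith
    _ ≤ _ := by gcongr

theorem hyperWeight_ceil_hyperMode_mul_sqrt_le (hn : 4096 ≤ n) (hm : |2 * (m : ℝ) - n| ≤ 1)
    (hk : |2 * (k : ℝ) - n| ≤ n / 16) :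
    hyperWeight n m k ⌈hyperMode n m k⌉₊ * √n ≤ 16 * n.choose k := by
  set J := ⌈hyperMode n m k⌉₊
  set r := √(n : ℝ)
  have hnr : (4096 : ℝ) ≤ n := by exact_mod_cast hn
  have hr2 : r * r = n := mul_self_sqrt (Nat.cast_nonneg n)
  have hr : 64 ≤ r := le_sqrt_of_sq_le (by linarith)
  have hrr : 64 * r ≤ n := by rw [← hr2]; exact mul_le_mul_of_nonneg_right hr (by positivity)
  set L := ⌊r / 8⌋₊
  have hL1 : (L : ℝ) ≤ r / 8 := Nat.floor_le (by positivity)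
  have hL2 : r / 8 < L + 1 := Nat.lt_floor_add_one _
  have hLn : (L : ℝ) ≤ n / 512 := by linarith
  have hmn : m ≤ n := by
    have := (ceil_hyperMode_add_lt hn hm hk hLn).1
    exact_mod_cast (show (m : ℝ) ≤ n by linarith [(abs_le.mp hm).2])
  set δ : ℝ := 26 * (L + 1) / n
  have hLL : (L : ℝ) * (L + 1) ≤ r / 8 * (r / 8 + 1) :=
    mul_le_mul hL1 (by linarith) (by positivity) (by positivity)
  have hLδ : L * δ ≤ 1 / 2 := by
    rw [mul_div_assoc', div_le_iff₀ (by positivity)]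
    nlinarith
  have hδ1 : δ ≤ 1 := by
    rw [div_le_one (by positivity)]; linarith
  have hwin := mul_le_sum_range_of_le_succ (fun s => hyperWeight n m k (J + s)) (by positivity)
    hδ1 (hyperWeight_nonneg _) (one_sub_mul_hyperWeight_ceil_add_le hn hm hk hLn)
  rw [add_zero] at hwin
  have hsum : ∑ s ∈ range (L + 1), hyperWeight n m k (J + s) ≤ n.choose k := by
    have := (ceil_hyperMode_add_lt hn hm hk hLn).2
    rw [choose_eq_sum_hyperWeight hmn, ← Nat.add_sub_cancel_left (n := J) (m := L + 1),
      ← sum_Ico_eq_sum_range]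
    refine sum_le_sum_of_subset_of_nonneg (fun x hx => ?_) (fun x _ _ => hyperWeight_nonneg x)
    simp only [mem_Ico, mem_range] at hx ⊢
    omega
  have hJ0 := hyperWeight_nonneg (n := n) (m := m) (k := k) J
  calc hyperWeight n m k J * r ≤ hyperWeight n m k J * (8 * (L + 1)) := by gcongr; linarith
    _ ≤ 16 * ((L + 1) * ((1 - L * δ) * hyperWeight n m k J)) := by
        nlinarith [mul_nonneg (mul_nonneg (by positivity : (0 : ℝ) ≤ L + 1) hJ0)
          (by linarith : (0 : ℝ) ≤ 1 / 2 - L * δ)]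
    _ ≤ 16 * n.choose k := by linarith

theorem hyperWeight_le_gaussian_mul_choose_of_le (hn : 4096 ≤ n) (hm : |2 * (m : ℝ) - n| ≤ 1)
    (hk : |2 * (k : ℝ) - n| ≤ n / 16) {j : ℕ} (hjm : j ≤ m) (hjk : j ≤ k) :
    hyperWeight n m k j ≤
      16 * exp 3 / √n * exp (-(j - ((m + k) / 2 - n / 4)) ^ 2 / (8 * n)) * n.choose k := by
  set μ := hyperMode n m k
  set c : ℝ := (m + k) / 2 - n / 4
  have hnr : (4096 : ℝ) ≤ n := by exact_mod_cast hn
  obtain ⟨hm1, hm2⟩ := abs_le.mp hm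
  obtain ⟨hk1, hk2⟩ := abs_le.mp hk
  have hmn : m ≤ n := by exact_mod_cast (show (m : ℝ) ≤ n by linarith)
  have hkn : k ≤ n := by exact_mod_cast (show (k : ℝ) ≤ n by linarith)
  have hsq : (j - c) ^ 2 ≤ 2 * (j - μ) ^ 2 + 2 := by
    have : (μ - c) ^ 2 ≤ 1 := by
      rw [← sq_abs]; nlinarith [abs_nonneg (μ - c), abs_hyperMode_sub_le hm hk]
    nlinarith [sq_nonneg ((j : ℝ) - μ - (μ - c))]
  have hexp : (2 - (j - μ) ^ 2 / 4) / n ≤ 3 + (-(j - c) ^ 2 / (8 * n)) := by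
    have hn0 : (0 : ℝ) < n := by positivity
    have key : ((j - c) ^ 2 - 2 * (j - μ) ^ 2 - 2) / (8 * n) ≤ 0 :=
      div_nonpos_of_nonpos_of_nonneg (by linarith) (by positivity)
    have h9 : 9 / 4 / (n : ℝ) ≤ 3 := by rw [div_le_iff₀ hn0]; linarith
    have e : (2 - (j - μ) ^ 2 / 4) / n - (3 + (-(j - c) ^ 2 / (8 * n)))
        = ((j - c) ^ 2 - 2 * (j - μ) ^ 2 - 2) / (8 * n) + (9 / 4 / n - 3) := by
      field_simp; ring
    linarith
  have hJ : hyperWeight n m k ⌈μ⌉₊ ≤ 16 * n.choose k / √n := by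
    rw [le_div_iff₀ (sqrt_pos.mpr (by positivity))]
    exact hyperWeight_ceil_hyperMode_mul_sqrt_le hn hm hk
  calc hyperWeight n m k j ≤ exp ((2 - (j - μ) ^ 2 / 4) / n) * hyperWeight n m k ⌈μ⌉₊ :=
        hyperWeight_le_exp_mul_hyperWeight_ceil hmn hkn hjm hjk
    _ ≤ exp (3 + (-(j - c) ^ 2 / (8 * n))) * (16 * n.choose k / √n) := by
        gcongr; exact hyperWeight_nonneg _
    _ = 16 * exp 3 / √n * exp (-(j - c) ^ 2 / (8 * n)) * n.choose k := by
        rw [exp_add]; ring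

end HyperWeight

theorem one_le_div_sqrt_mul_exp {n : ℕ} (hn0 : 0 < n) (hn : n < 4096) {d : ℝ} (hd : |d| ≤ n) :
    1 ≤ 64 * exp 128 / √n * exp (-(1 / 32) * d ^ 2 / n) := by
  have hn0' : (0 : ℝ) < n := by exact_mod_cast hn0
  have hsqrt : √(n : ℝ) ≤ 64 := by
    rw [sqrt_le_left (by norm_num)]; exact_mod_cast (show n ≤ 64 ^ 2 by omega)
  have hd2 : d ^ 2 ≤ (n : ℝ) ^ 2 := by rw [← sq_abs]; gcongr
  have hexp : exp (-128) ≤ exp (-(1 / 32) * d ^ 2 / n) := by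
    rw [exp_le_exp, neg_mul, neg_div, neg_le_neg_iff, div_le_iff₀ hn0']
    have : (n : ℝ) < 4096 := by exact_mod_cast hn
    nlinarith
  calc (1 : ℝ) = 64 * exp 128 / 64 * exp (-128) := by
        rw [mul_div_cancel_left₀ _ (by norm_num : (64 : ℝ) ≠ 0), ← exp_add]; norm_num
    _ ≤ 64 * exp 128 / √n * exp (-(1 / 32) * d ^ 2 / n) := by gcongr

theorem hyperWeight_le_gaussian_mul_choose {n m k : ℕ} (hn : 2 ≤ n)
    (hm : |2 * (m : ℝ) - n| ≤ 1) (hk : |2 * (k : ℝ) - n| ≤ n / 16) {j : ℕ} (hjm : j ≤ m)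
    (hjk : j ≤ k) :
    hyperWeight n m k j ≤
      64 * exp 128 / √n * exp (-(1 / 32) * (2 * j - m - (2 * k - n) / 2) ^ 2 / n) *
        n.choose k := by
  rcases le_or_gt 4096 n with hbig | hsmall
  · have hexp : -(1 / 32) * (2 * (j : ℝ) - m - (2 * k - n) / 2) ^ 2 / n
        = -(j - ((m + k) / 2 - n / 4)) ^ 2 / (8 * n) := by
      field_simp; ring
    rw [hexp]
    refine (hyperWeight_le_gaussian_mul_choose_of_le hbig hm hk hjm hjk).trans ?_
    gcongr <;> norm_num
  · have hn' : (2 : ℝ) ≤ n := by exact_mod_cast hn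
    have hmn : m ≤ n := by exact_mod_cast (show (m : ℝ) ≤ n by linarith [(abs_le.mp hm).2])
    have hd : |2 * (j : ℝ) - m - (2 * k - n) / 2| ≤ n := by
      have : (j : ℝ) ≤ m := by exact_mod_cast hjm
      rw [abs_le] at hm hk ⊢; constructor <;> linarith
    calc hyperWeight n m k j ≤ 1 * n.choose k := by
          rw [one_mul]; exact hyperWeight_le_choose hmn hjk
      _ ≤ _ := by gcongr; exact one_le_div_sqrt_mul_exp (by omega) hsmall hd

/-- Gaussian upper bound on the midpoint distribution of a conditioned simple random
walk: there exist `c₂, b₂, ε₀ > 0` such that for every `n ≥ 2`, every `m` with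
`|2m - n| ≤ 1`, every `z ∈ L_n` with `|z| ≤ ε₀ n`, and every `w ∈ ℤ`,
`P{S_m = w | S_n = z} ≤ c₂ n^{-1/2} exp{-b₂ (w - z/2)²/n}`. -/
theorem stmt18 :
    ∃ c₂ : ℝ, 0 < c₂ ∧ ∃ b₂ : ℝ, 0 < b₂ ∧ ∃ ε₀ : ℝ, 0 < ε₀ ∧
      ∀ n : ℕ, 2 ≤ n → ∀ m : ℕ, |(2 * (m : ℤ)) - (n : ℤ)| ≤ 1 →
      ∀ z : ℤ, (|z| : ℝ) ≤ ε₀ * n →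
      0 < (Finset.univ.filter (fun f : Fin n → Bool => walkSum n f n = z)).card →
      ∀ w : ℤ,
        ((Finset.univ.filter (fun f : Fin n → Bool =>
              walkSum n f m = w ∧ walkSum n f n = z)).card : ℝ)
            / ((Finset.univ.filter (fun f : Fin n → Bool => walkSum n f n = z)).card : ℝ)
          ≤ c₂ / Real.sqrt n * Real.exp (-b₂ * ((w : ℝ) - (z : ℝ) / 2) ^ 2 / n) := by
  refine ⟨64 * exp 128, by positivity, 1 / 32, by norm_num, 1 / 16, by norm_num, ?_⟩
  intro n hn m hm z hz _ w
  have hmn : m ≤ n := by rw [abs_le] at hm; omega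
  rcases Nat.eq_zero_or_pos #{f : Fin n → Bool | walkSum n f m = w ∧ walkSum n f n = z}
    with hnum | hnum
  · rw [hnum, Nat.cast_zero, zero_div]; positivity
  obtain ⟨f, hf⟩ := card_pos.mp hnum
  obtain ⟨j, k, hjm, hjk, hkn, hfm, hfn⟩ := exists_walkSum_eq hmn f
  obtain ⟨rfl, rfl⟩ : w = 2 * j - m ∧ z = 2 * k - n := by
    simp only [mem_filter, mem_univ, true_and] at hf; exact ⟨hf.1 ▸ hfm, hf.2 ▸ hfn⟩
  rw [card_walkSum_eq_and_walkSum_eq hmn hjk, card_walkSum_eq,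
    div_le_iff₀ (by exact_mod_cast Nat.choose_pos hkn)]
  push_cast at hz ⊢
  exact hyperWeight_le_gaussian_mul_choose hn (by exact_mod_cast hm) (by linarith) hjm hjk
end
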